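/- arXiv:2503.10971 — 9 statements merged into one kernel-verified Lean document; each statement's English description precedes it below -/
import Mathlib

section
/- Let n be a positive integer and set ε := 1/(2n·√(1+k²)·K(k)) and ρ := √(2k²/(1+k²)). Then the function u(x) := ρ·y((2nx+1)·K(k)) satisfies ε²·u''(x) + u(x) − u(x)³ = 0 for all x ∈ [0,1], together with the Neumann boundary conditions u'(0) = u'(1) = 0, and u(0) = ρ. In particular, the problem ε²u'' + u − u³ = 0 on (0,1) with u'(0)=u'(1)=0 has an internal n-layer solution expressed through the Jacobi elliptic sine. -/
/-!
Multiplying the equation by `y'` shows that `y'² + (1 + k²) y² - k² y⁴` is conserved, so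
`y'² = (1 - y²)(1 - k² y²)` and `|y| ≤ 1`. As long as `y' > 0` this gives
`d/dt F(y t) = 1` for the incomplete elliptic integral `F(z) = ∫₀^z ds / √((1 - s²)(1 - k² s²))`,
so `F(y t) = t`; since `F < K` on `[0, 1)`, the first point where `y'` vanishes is `t = K`, with
`y K = 1`. The vector field is Lipschitz on `|y| ≤ 1`, so by uniqueness `y` is even about `K`
and odd about `0`, hence `2K`-antiperiodic, and `y'` vanishes at every `(2m + 1) K`. The affine
change of variable `t = (2n x + 1) K` turns the equation into `ε² u'' + u - u³ = 0` and sends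
`x = 0, 1` to `K` and `(2n + 1) K`.
-/

open Real Filter Set

/-- The complete elliptic integral of the first kind. -/
noncomputable def Kint (k : ℝ) : ℝ :=
  ∫ s in (0:ℝ)..1, 1 / Real.sqrt ((1 - s ^ 2) * (1 - k ^ 2 * s ^ 2))

open Function MeasureTheory

noncomputable def ellipticIntegrand (k s : ℝ) : ℝ :=
  1 / √((1 - s ^ 2) * (1 - k ^ 2 * s ^ 2))

/-- The incomplete elliptic integral of the first kind in Jacobi's form, `F(arcsin z, k)`. -/
noncomputable def ellipticF (k z : ℝ) : ℝ :=
  ∫ s in (0:ℝ)..z, ellipticIntegrand k s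

section EllipticIntegral

variable {k : ℝ}

theorem ellipticF_one (k : ℝ) : ellipticF k 1 = Kint k := rfl

theorem ellipticF_zero (k : ℝ) : ellipticF k 0 = 0 := intervalIntegral.integral_same

theorem sqrt_ellipticRadicand_pos (hk : k ^ 2 < 1) {s : ℝ} (hs : s ∈ Ioo (-1) 1) :
    0 < √((1 - s ^ 2) * (1 - k ^ 2 * s ^ 2)) := by
  have hs2 : s ^ 2 < 1 := by nlinarith [hs.1, hs.2]
  have hks2 : k ^ 2 * s ^ 2 < 1 := by nlinarith [sq_nonneg k, sq_nonneg s]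
  exact sqrt_pos.2 (mul_pos (by linarith) (by linarith))

theorem ellipticIntegrand_pos (hk : k ^ 2 < 1) {s : ℝ} (hs : s ∈ Ioo (-1) 1) :
    0 < ellipticIntegrand k s :=
  one_div_pos.2 (sqrt_ellipticRadicand_pos hk hs)

theorem continuousOn_ellipticIntegrand (hk : k ^ 2 < 1) :
    ContinuousOn (ellipticIntegrand k) (Ioo (-1) 1) :=
  continuousOn_const.div (by fun_prop) fun _ hs => (sqrt_ellipticRadicand_pos hk hs).ne'

theorem intervalIntegrable_ellipticIntegrand (hk : k ^ 2 < 1) :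
    IntervalIntegrable (ellipticIntegrand k) volume 0 1 := by
  have harcsin : IntervalIntegrable (fun s => 1 / √(1 - s ^ 2)) volume 0 1 :=
    intervalIntegral.intervalIntegrable_deriv_of_nonneg continuous_arcsin.continuousOn
      (fun s hs => hasDerivAt_arcsin (by simp at hs; linarith) (by simp at hs; linarith))
      (fun s _ => by positivity)
  have hcont : ContinuousOn (fun s => 1 / √(1 - k ^ 2 * s ^ 2)) (uIcc 0 1) := by
    refine continuousOn_const.div (by fun_prop) fun s hs => ?_
    rw [uIcc_of_le zero_le_one] at hs
    have : s ^ 2 ≤ 1 := by nlinarith [hs.1, hs.2]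
    have : 0 < 1 - k ^ 2 * s ^ 2 := by nlinarith [sq_nonneg k]
    positivity
  refine (harcsin.mul_continuousOn hcont).congr_uIoo fun s hs => ?_
  rw [uIoo_of_le zero_le_one] at hs
  have : 0 ≤ 1 - k ^ 2 * s ^ 2 := by nlinarith [sq_nonneg k, hs.1, hs.2]
  simp only [ellipticIntegrand, sqrt_mul' _ this, one_div_mul_one_div]

theorem hasDerivAt_ellipticF (hk : k ^ 2 < 1) {z : ℝ} (hz : z ∈ Ioo (-1) 1) :
    HasDerivAt (ellipticF k) (ellipticIntegrand k z) z := by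
  have hcont := continuousOn_ellipticIntegrand hk
  have h0 : (0:ℝ) ∈ Ioo (-1) 1 := by norm_num
  exact intervalIntegral.integral_hasDerivAt_right
    ((hcont.mono (ordConnected_Ioo.uIcc_subset h0 hz)).intervalIntegrable)
    (hcont.stronglyMeasurableAtFilter isOpen_Ioo z hz)
    (hcont.continuousAt (isOpen_Ioo.mem_nhds hz))

theorem continuousOn_ellipticF (hk : k ^ 2 < 1) : ContinuousOn (ellipticF k) (Icc 0 1) := by
  have := intervalIntegral.continuousOn_primitive_interval'
    (intervalIntegrable_ellipticIntegrand hk) left_mem_uIcc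
  rwa [uIcc_of_le zero_le_one] at this

theorem ellipticF_lt_Kint (hk : k ^ 2 < 1) {z : ℝ} (hz : z ∈ Ico 0 1) :
    ellipticF k z < Kint k := by
  have hi := intervalIntegrable_ellipticIntegrand hk
  have hsub : ∀ {a b}, a ∈ Icc (0:ℝ) 1 → b ∈ Icc (0:ℝ) 1 → uIcc a b ⊆ uIcc 0 1 := fun ha hb =>
    uIcc_subset_uIcc (by simpa [uIcc_of_le zero_le_one] using ha)
      (by simpa [uIcc_of_le zero_le_one] using hb)
  have hz' : z ∈ Icc (0:ℝ) 1 := ⟨hz.1, hz.2.le⟩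
  have hpos : 0 < ∫ s in z..1, ellipticIntegrand k s :=
    intervalIntegral.intervalIntegral_pos_of_pos_on (hi.mono_set (hsub hz' ⟨zero_le_one, le_rfl⟩))
      (fun s hs => ellipticIntegrand_pos hk ⟨by linarith [hz.1, hs.1], hs.2⟩) hz.2
  rw [← ellipticF_one, ellipticF, ellipticF,
    ← intervalIntegral.integral_add_adjacent_intervals
      (hi.mono_set (hsub ⟨le_rfl, zero_le_one⟩ hz')) (hi.mono_set (hsub hz' ⟨zero_le_one, le_rfl⟩))]
  linarith

theorem Kint_pos (hk : k ^ 2 < 1) : 0 < Kint k := by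
  simpa [ellipticF_zero] using ellipticF_lt_Kint hk ⟨le_rfl, one_pos⟩

end EllipticIntegral

theorem Function.Antiperiodic.deriv {𝕜 F : Type*} [NontriviallyNormedField 𝕜]
    [NormedAddCommGroup F] [NormedSpace 𝕜 F] {f : 𝕜 → F} {c : 𝕜} (h : Antiperiodic f c) :
    Antiperiodic (deriv f) c := fun x => by
  rw [← deriv_comp_add_const, h.funext, deriv.neg]

theorem deriv_comp_mul_add (y : ℝ → ℝ) (c b x : ℝ) :
    deriv (fun x => y (c * x + b)) x = c * deriv y (c * x + b) := by
  have h := deriv_comp_mul_left c (fun z => y (z + b)) x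
  simp only [deriv_comp_add_const, smul_eq_mul] at h
  exact h

theorem deriv_const_mul_comp_mul_add (y : ℝ → ℝ) (ρ c b x : ℝ) :
    deriv (fun x => ρ * y (c * x + b)) x = ρ * (c * deriv y (c * x + b)) := by
  rw [deriv_const_mul_field, deriv_comp_mul_add]

def snField (k : ℝ) (p : ℝ × ℝ) : ℝ × ℝ :=
  (p.2, 2 * k ^ 2 * p.1 ^ 3 - (1 + k ^ 2) * p.1)

theorem lipschitzOnWith_snField (k : ℝ) :
    LipschitzOnWith (7 * k ^ 2 + 1).toNNReal (snField k) {p | p.1 ^ 2 ≤ 1} := by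
  refine LipschitzOnWith.of_dist_le' fun p hp q hq => ?_
  have hL : 1 ≤ 7 * k ^ 2 + 1 := by nlinarith [sq_nonneg k]
  have h1 : |p.1 - q.1| ≤ dist p q := by simp [Prod.dist_eq, Real.dist_eq]
  have h2 : |p.2 - q.2| ≤ dist p q := by simp [Prod.dist_eq, Real.dist_eq]
  have hquad : p.1 ^ 2 + p.1 * q.1 + q.1 ^ 2 ∈ Icc 0 3 := by
    simp only [mem_ofPred_eq] at hp hq
    constructor <;> nlinarith [sq_nonneg (p.1 + q.1), sq_nonneg (p.1 - q.1)]
  have hfactor : |2 * k ^ 2 * (p.1 ^ 2 + p.1 * q.1 + q.1 ^ 2) - (1 + k ^ 2)| ≤ 7 * k ^ 2 + 1 := by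
    rw [abs_le]
    constructor <;> nlinarith [mul_le_mul_of_nonneg_left hquad.1 (sq_nonneg k),
      mul_le_mul_of_nonneg_left hquad.2 (sq_nonneg k), sq_nonneg k]
  have hcubic : 2 * k ^ 2 * p.1 ^ 3 - (1 + k ^ 2) * p.1 - (2 * k ^ 2 * q.1 ^ 3 - (1 + k ^ 2) * q.1)
      = (p.1 - q.1) * (2 * k ^ 2 * (p.1 ^ 2 + p.1 * q.1 + q.1 ^ 2) - (1 + k ^ 2)) := by ring
  simp only [snField]
  rw [Prod.dist_eq, Real.dist_eq, Real.dist_eq]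
  refine max_le (by nlinarith [abs_nonneg (p.2 - q.2)]) ?_
  rw [hcubic, abs_mul]
  calc |p.1 - q.1| * _ ≤ dist p q * (7 * k ^ 2 + 1) :=
        mul_le_mul h1 hfactor (abs_nonneg _) dist_nonneg
    _ = _ := mul_comm _ _

structure SolvesSnODE (k : ℝ) (y : ℝ → ℝ) : Prop where
  differentiable : Differentiable ℝ y
  differentiable_deriv : Differentiable ℝ (deriv y)
  deriv_deriv : ∀ t, deriv (deriv y) t = 2 * k ^ 2 * y t ^ 3 - (1 + k ^ 2) * y t

namespace SolvesSnODE

variable {k : ℝ} {y z : ℝ → ℝ}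

theorem of_contDiff (hy : ContDiff ℝ 2 y)
    (hode : ∀ x, deriv (deriv y) x + (1 + k ^ 2) * y x - 2 * k ^ 2 * (y x) ^ 3 = 0) :
    SolvesSnODE k y := by
  rw [show (2 : WithTop ℕ∞) = 1 + 1 from rfl, contDiff_succ_iff_deriv] at hy
  exact ⟨hy.1, hy.2.2.differentiable one_ne_zero, fun t => by linarith [hode t]⟩

theorem hasDerivAt_phase (hy : SolvesSnODE k y) (t : ℝ) :
    HasDerivAt (fun t => (y t, deriv y t)) (snField k (y t, deriv y t)) t := by
  have h := (hy.differentiable_deriv t).hasDerivAt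
  rw [hy.deriv_deriv] at h
  exact (hy.differentiable t).hasDerivAt.prodMk h

theorem energy_eq (hy : SolvesSnODE k y) (t : ℝ) :
    deriv y t ^ 2 + (1 + k ^ 2) * y t ^ 2 - k ^ 2 * y t ^ 4
      = deriv y 0 ^ 2 + (1 + k ^ 2) * y 0 ^ 2 - k ^ 2 * y 0 ^ 4 := by
  have hE : ∀ t, HasDerivAt (fun t => deriv y t ^ 2 + (1 + k ^ 2) * y t ^ 2 - k ^ 2 * y t ^ 4)
      0 t := by
    intro t
    have h1 := (hy.differentiable t).hasDerivAt
    have h2 := (hy.differentiable_deriv t).hasDerivAt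
    refine (((h2.pow 2).add ((h1.pow 2).const_mul (1 + k ^ 2))).sub
      ((h1.pow 4).const_mul (k ^ 2))).congr_deriv ?_
    rw [hy.deriv_deriv]
    push_cast
    ring
  exact is_const_of_deriv_eq_zero (fun s => (hE s).differentiableAt) (fun s => (hE s).deriv) t 0

theorem comp_const_sub (hy : SolvesSnODE k y) (a : ℝ) : SolvesSnODE k (fun t => y (a - t)) := by
  have hd : deriv (fun t => y (a - t)) = fun t => -deriv y (a - t) :=
    funext fun t => deriv_comp_const_sub y a t
  refine ⟨hy.differentiable.comp (by fun_prop), ?_, fun t => ?_⟩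
  · rw [hd]
    exact (hy.differentiable_deriv.comp (by fun_prop)).neg
  · rw [hd, deriv.fun_neg, deriv_comp_const_sub, neg_neg, hy.deriv_deriv]

theorem neg (hy : SolvesSnODE k y) : SolvesSnODE k (fun t => -y t) := by
  have hd : deriv (fun t => -y t) = fun t => -deriv y t := funext fun t => deriv.fun_neg
  refine ⟨hy.differentiable.neg, ?_, fun t => ?_⟩
  · rw [hd]
    exact hy.differentiable_deriv.neg
  · rw [hd, deriv.fun_neg, hy.deriv_deriv]
    ring

theorem eq_of_eq_of_deriv_eq (hy : SolvesSnODE k y) (hz : SolvesSnODE k z)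
    (hyb : ∀ t, y t ^ 2 ≤ 1) (hzb : ∀ t, z t ^ 2 ≤ 1) {t₀ : ℝ}
    (h : y t₀ = z t₀) (h' : deriv y t₀ = deriv z t₀) : y = z := by
  have hphase := ODE_solution_unique_univ (v := fun _ => snField k) (s := fun _ => {p | p.1 ^ 2 ≤ 1})
    (fun _ => lipschitzOnWith_snField k) (fun t => ⟨hy.hasDerivAt_phase t, hyb t⟩)
    (fun t => ⟨hz.hasDerivAt_phase t, hzb t⟩) (Prod.ext h h')
  exact funext fun t => congrArg Prod.fst (congrFun hphase t)

end SolvesSnODE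

theorem sq_le_one_of_forall_mul_nonneg {k : ℝ} (hk : k ^ 2 < 1) {y : ℝ → ℝ} (hc : Continuous y)
    (hy0 : y 0 = 0) (h : ∀ t, 0 ≤ (1 - y t ^ 2) * (1 - k ^ 2 * y t ^ 2)) (t : ℝ) :
    y t ^ 2 ≤ 1 := by
  by_contra! ht
  have hkt : 1 ≤ k ^ 2 * y t ^ 2 := by nlinarith [h t]
  -- `y ^ 2` would have to cross `(1, 1 / k²)`, where the product is negative; `c` lies there
  set c := 2 / (1 + k ^ 2)
  have hc1 : 1 < c := by rw [lt_div_iff₀ (by positivity)]; linarith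
  have hkc : k ^ 2 * c < 1 := by
    rw [mul_div_assoc', div_lt_one (by positivity)]; linarith
  have hct : c ∈ uIcc (y 0 ^ 2) (y t ^ 2) := by
    refine mem_uIcc.2 (Or.inl ⟨by rw [hy0]; linarith, ?_⟩)
    rw [div_le_iff₀ (by positivity)]
    nlinarith
  obtain ⟨s, -, hs : y s ^ 2 = c⟩ := intermediate_value_uIcc
    (show Continuous fun s => y s ^ 2 by fun_prop).continuousOn hct
  have := h s
  rw [hs] at this
  nlinarith

namespace SolvesSnODE

variable {k : ℝ} {y : ℝ → ℝ}

theorem sq_deriv_eq (hy : SolvesSnODE k y) (hy0 : y 0 = 0) (hy0' : deriv y 0 = 1) (t : ℝ) :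
    deriv y t ^ 2 = (1 - y t ^ 2) * (1 - k ^ 2 * y t ^ 2) := by
  have h := hy.energy_eq t
  rw [hy0, hy0'] at h
  linear_combination h

theorem sq_le_one (hk : k ^ 2 < 1) (hy : SolvesSnODE k y) (hy0 : y 0 = 0)
    (hy0' : deriv y 0 = 1) (t : ℝ) : y t ^ 2 ≤ 1 :=
  sq_le_one_of_forall_mul_nonneg hk hy.differentiable.continuous hy0
    (fun t => hy.sq_deriv_eq hy0 hy0' t ▸ sq_nonneg _) t

theorem sq_lt_one_of_deriv_ne_zero (hk : k ^ 2 < 1) (hy : SolvesSnODE k y) (hy0 : y 0 = 0)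
    (hy0' : deriv y 0 = 1) {t : ℝ} (ht : deriv y t ≠ 0) : y t ^ 2 < 1 := by
  have h := hy.sq_deriv_eq hy0 hy0' t
  have hle := hy.sq_le_one hk hy0 hy0' t
  refine lt_of_le_of_ne hle fun h1 => ht ?_
  rw [h1, sub_self, zero_mul] at h
  exact pow_eq_zero_iff two_ne_zero |>.1 h

theorem hasDerivAt_ellipticF_comp (hk : k ^ 2 < 1) (hy : SolvesSnODE k y) (hy0 : y 0 = 0)
    (hy0' : deriv y 0 = 1) {t : ℝ} (ht : 0 < deriv y t) :
    HasDerivAt (fun t => ellipticF k (y t)) 1 t := by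
  have hyt := hy.sq_lt_one_of_deriv_ne_zero hk hy0 hy0' ht.ne'
  have hmem : y t ∈ Ioo (-1) 1 := ⟨by nlinarith, by nlinarith⟩
  have hsqrt : √((1 - y t ^ 2) * (1 - k ^ 2 * y t ^ 2)) = deriv y t := by
    rw [← hy.sq_deriv_eq hy0 hy0', sqrt_sq ht.le]
  refine ((hasDerivAt_ellipticF hk hmem).comp t (hy.differentiable t).hasDerivAt).congr_deriv ?_
  rw [ellipticIntegrand, hsqrt, one_div_mul_cancel ht.ne']

theorem ellipticF_comp_eq_of_deriv_pos (hk : k ^ 2 < 1) (hy : SolvesSnODE k y)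
    (hy0 : y 0 = 0) (hy0' : deriv y 0 = 1) {T : ℝ} (hT : 0 ≤ T)
    (hpos : ∀ s ∈ Ico 0 T, 0 < deriv y s) : 0 ≤ y T ∧ ellipticF k (y T) = T := by
  have hc := hy.differentiable.continuous
  have hmono : MonotoneOn y (Icc 0 T) :=
    monotoneOn_of_deriv_nonneg (convex_Icc 0 T) hc.continuousOn hy.differentiable.differentiableOn
      fun s hs => (hpos s (Ioo_subset_Ico_self (by rwa [interior_Icc] at hs))).le
  have hmaps : MapsTo y (Icc 0 T) (Icc 0 1) := fun s hs =>
    ⟨hy0 ▸ hmono ⟨le_rfl, hT⟩ hs hs.1, by nlinarith [hy.sq_le_one hk hy0 hy0' s]⟩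
  have hconst := constant_of_has_deriv_right_zero
    (((continuousOn_ellipticF hk).comp hc.continuousOn hmaps).sub continuousOn_id)
    (fun s hs => by
      have h := (hy.hasDerivAt_ellipticF_comp hk hy0 hy0' (hpos s hs)).sub (hasDerivAt_id s)
      rw [sub_self] at h
      exact h.hasDerivWithinAt)
    T ⟨hT, le_rfl⟩
  simp only [Pi.sub_apply, comp_apply, id_eq, hy0, ellipticF_zero, sub_zero] at hconst
  exact ⟨(hmaps ⟨hT, le_rfl⟩).1, sub_eq_zero.1 hconst⟩

theorem apply_Kint_eq_one_and_deriv_eq_zero (hk : k ^ 2 < 1) (hy : SolvesSnODE k y)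
    (hy0 : y 0 = 0) (hy0' : deriv y 0 = 1) : y (Kint k) = 1 ∧ deriv y (Kint k) = 0 := by
  have hc' := hy.differentiable_deriv.continuous
  -- `T` is the first point of `[0, K]` where `y'` stops being positive
  set W := {t ∈ Icc 0 (Kint k) | deriv y t ≤ 0}
  have hWne : W.Nonempty := by
    by_contra! hW
    have hpos : ∀ s ∈ Icc 0 (Kint k), 0 < deriv y s := fun s hs =>
      not_le.1 fun h => hW.subset ⟨hs, h⟩
    obtain ⟨hyK0, hFK⟩ := hy.ellipticF_comp_eq_of_deriv_pos hk hy0 hy0' (Kint_pos hk).le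
      fun s hs => hpos s (Ico_subset_Icc_self hs)
    have hyK := hy.sq_lt_one_of_deriv_ne_zero hk hy0 hy0' (hpos _ ⟨(Kint_pos hk).le, le_rfl⟩).ne'
    exact (ellipticF_lt_Kint hk ⟨hyK0, by nlinarith⟩).ne hFK
  have hWbdd : BddBelow W := ⟨0, fun t ht => ht.1.1⟩
  set T := sInf W
  have hTW : T ∈ W := (isClosed_Icc.inter (isClosed_le hc' continuous_const)).csInf_mem hWne hWbdd
  have hpos : ∀ s ∈ Ico 0 T, 0 < deriv y s := fun s hs =>
    not_le.1 fun h => (csInf_le hWbdd ⟨⟨hs.1, hs.2.le.trans hTW.1.2⟩, h⟩).not_gt hs.2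
  have hT0 : T ≠ 0 := fun h => by
    have := hTW.2
    rw [h, hy0'] at this
    norm_num at this
  have hy'T : deriv y T = 0 := le_antisymm hTW.2 <|
    le_on_closure (fun s hs => (hpos s hs).le) continuousOn_const hc'.continuousOn
      (by rw [closure_Ico (Ne.symm hT0)]; exact ⟨hTW.1.1, le_rfl⟩)
  obtain ⟨hyT0, hFT⟩ := hy.ellipticF_comp_eq_of_deriv_pos hk hy0 hy0' hTW.1.1 hpos
  have hyT : y T = 1 := by
    have h := hy.sq_deriv_eq hy0 hy0' T
    have hle := hy.sq_le_one hk hy0 hy0' T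
    have hkT : 0 < 1 - k ^ 2 * y T ^ 2 := by nlinarith [mul_le_mul_of_nonneg_left hle (sq_nonneg k)]
    rw [hy'T, zero_pow two_ne_zero, eq_comm, mul_eq_zero, or_iff_left hkT.ne'] at h
    nlinarith
  have hTK : T = Kint k := by rw [← hFT, hyT, ellipticF_one]
  exact hTK ▸ ⟨hyT, hy'T⟩

theorem antiperiodic (hk : k ^ 2 < 1) (hy : SolvesSnODE k y) (hy0 : y 0 = 0)
    (hy0' : deriv y 0 = 1) : Antiperiodic y (2 * Kint k) := by
  obtain ⟨-, hy'K⟩ := hy.apply_Kint_eq_one_and_deriv_eq_zero hk hy0 hy0'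
  have hb := hy.sq_le_one hk hy0 hy0'
  have heven : (fun t => y (2 * Kint k - t)) = y :=
    (hy.comp_const_sub _).eq_of_eq_of_deriv_eq hy (fun t => hb _) hb (t₀ := Kint k)
      (by ring_nf) (by rw [deriv_comp_const_sub, two_mul, add_sub_cancel_right, hy'K, neg_zero])
  have hodd : (fun t => -y (0 - t)) = y :=
    (hy.comp_const_sub 0).neg.eq_of_eq_of_deriv_eq hy (fun t => by simpa using hb _) hb
      (t₀ := 0) (by simp [hy0]) (by rw [deriv.fun_neg, deriv_comp_const_sub, sub_zero, neg_neg])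
  intro t
  calc y (t + 2 * Kint k) = y (2 * Kint k - -t) := by ring_nf
    _ = y (-t) := congrFun heven (-t)
    _ = -y t := by rw [← congrFun hodd t, zero_sub, neg_neg]

theorem deriv_Kint_add_nat_mul_eq_zero (hk : k ^ 2 < 1) (hy : SolvesSnODE k y) (hy0 : y 0 = 0)
    (hy0' : deriv y 0 = 1) (m : ℕ) : deriv y (Kint k + m * (2 * Kint k)) = 0 :=
  ((hy.antiperiodic hk hy0 hy0').deriv.const_add (Kint k)).nat_mul_eq_of_eq_zero
    (by simpa using (hy.apply_Kint_eq_one_and_deriv_eq_zero hk hy0 hy0').2) m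

theorem allenCahn_comp_mul_add (hy : SolvesSnODE k y) {ε ρ c b : ℝ}
    (hε : ε ^ 2 * c ^ 2 * (1 + k ^ 2) = 1) (hρ : ρ ^ 2 * (1 + k ^ 2) = 2 * k ^ 2) (x : ℝ) :
    ε ^ 2 * deriv (deriv fun x => ρ * y (c * x + b)) x + ρ * y (c * x + b)
      - (ρ * y (c * x + b)) ^ 3 = 0 := by
  simp only [funext (deriv_const_mul_comp_mul_add y ρ c b), deriv_const_mul_field',
    deriv_comp_mul_add (deriv y), hy.deriv_deriv]
  refine (mul_eq_zero.1 ?_).resolve_left (by positivity : (1 + k ^ 2) ≠ 0)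
  linear_combination (ρ * (2 * k ^ 2 * y (c * x + b) ^ 3 - (1 + k ^ 2) * y (c * x + b))) * hε
    - ρ * y (c * x + b) ^ 3 * hρ

end SolvesSnODE

theorem stmt1 (k : ℝ) (hk : k ∈ Set.Ioo (0:ℝ) 1)
    (y : ℝ → ℝ) (hy : ContDiff ℝ 2 y)
    (hode : ∀ x : ℝ, deriv (deriv y) x + (1 + k ^ 2) * y x - 2 * k ^ 2 * (y x) ^ 3 = 0)
    (hy0 : y 0 = 0) (hy0' : deriv y 0 = 1)
    (n : ℕ) (hn : 0 < n)
    (ε ρ : ℝ) (u : ℝ → ℝ)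
    (hε : ε = 1 / (2 * n * Real.sqrt (1 + k ^ 2) * Kint k))
    (hρ : ρ = Real.sqrt (2 * k ^ 2 / (1 + k ^ 2)))
    (hu : ∀ x : ℝ, u x = ρ * y ((2 * n * x + 1) * Kint k)) :
    (∀ x ∈ Set.Icc (0:ℝ) 1,
      ε ^ 2 * deriv (deriv u) x + u x - (u x) ^ 3 = 0) ∧
    deriv u 0 = 0 ∧ deriv u 1 = 0 ∧ u 0 = ρ := by
  have hk2 : k ^ 2 < 1 := by nlinarith [hk.1, hk.2]
  have hsol := SolvesSnODE.of_contDiff hy hode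
  have hK := Kint_pos hk2
  have hn' : (0 : ℝ) < n := Nat.cast_pos.2 hn
  obtain ⟨hyK, hy'K⟩ := hsol.apply_Kint_eq_one_and_deriv_eq_zero hk2 hy0 hy0'
  obtain rfl : u = fun x => ρ * y (2 * n * Kint k * x + Kint k) :=
    funext fun x => by rw [hu]; ring_nf
  have hε2 : ε ^ 2 * (2 * n * Kint k) ^ 2 * (1 + k ^ 2) = 1 := by
    rw [hε, div_pow, mul_pow, mul_pow, sq_sqrt (by positivity)]
    field_simp
  have hρ2 : ρ ^ 2 * (1 + k ^ 2) = 2 * k ^ 2 := by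
    rw [hρ, sq_sqrt (by positivity)]
    field_simp
  refine ⟨fun x _ => hsol.allenCahn_comp_mul_add hε2 hρ2 x, ?_, ?_, ?_⟩
  · rw [deriv_const_mul_comp_mul_add, mul_zero, zero_add, hy'K, mul_zero, mul_zero]
  · rw [deriv_const_mul_comp_mul_add, mul_one, add_comm,
      show Kint k + 2 * n * Kint k = Kint k + n * (2 * Kint k) by ring,
      hsol.deriv_Kint_add_nat_mul_eq_zero hk2 hy0 hy0' n, mul_zero, mul_zero]
  · simp [hyK]
end

section
/- Let ε > 0 and let u ∈ C²([0,1],ℝ) satisfy ε²u'' + u − u³ = 0 on [0,1] with u'(0) = u'(1) = 0; set ρ := u(0). Let λ ∈ ℂ satisfy λ² + 2λ − 3(1−ρ²)² ≠ 0. Then the complex-valued function φ(x) := (−(3+λ) + 3u(x)²)/(λ² + 2λ − 3(1−ρ²)²) satisfies ε²φ''(x) + (1 − 3u(x)²)φ(x) − λφ(x) = 1 for all x ∈ [0,1], together with φ'(0) = φ'(1) = 0. That is, φ = (L − λ)⁻¹[1] for the linearized operator L := ε²∂ₓₓ + (1 − 3u²) with Neumann boundary conditions. -/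
/-!
Multiplying the equation by `u'` shows that the energy `ε² u'² + u² - u⁴/2` is conserved, and the
Neumann condition at `0` fixes its value to `ρ² - ρ⁴/2`. Since `φ` is an affine function of `u²`,
`ε² φ''` involves only `ε² u'²` and `ε² u''`; replacing these by `ρ² - ρ⁴/2 - u² + u⁴/2` and
`u³ - u` turns `ε² φ'' + (1 - 3u² - λ) φ` into a rational function of `u` which, with the
denominator `λ² + 2λ - 3(1 - ρ²)²`, is identically `1`.
-/

open Real Filter Set Complex

noncomputable def stationaryEnergy (ε : ℝ) (u : ℝ → ℝ) (x : ℝ) : ℝ :=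
  ε ^ 2 * deriv u x ^ 2 + u x ^ 2 - u x ^ 4 / 2

theorem hasDerivAt_stationaryEnergy (ε : ℝ) {u : ℝ → ℝ} {x : ℝ} (hu : DifferentiableAt ℝ u x)
    (hu' : DifferentiableAt ℝ (deriv u) x) :
    HasDerivAt (stationaryEnergy ε u)
      (2 * deriv u x * (ε ^ 2 * deriv (deriv u) x + u x - u x ^ 3)) x := by
  have h := (((hu'.hasDerivAt.fun_pow 2).const_mul (ε ^ 2)).fun_add
    (hu.hasDerivAt.fun_pow 2)).fun_sub ((hu.hasDerivAt.fun_pow 4).div_const 2)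
  exact h.congr_deriv (by norm_num; ring)

theorem stationaryEnergy_eq_of_ode {ε a b : ℝ} {u : ℝ → ℝ} (hu : ContDiff ℝ 2 u)
    (hode : ∀ x ∈ Icc a b, ε ^ 2 * deriv (deriv u) x + u x - u x ^ 3 = 0) :
    ∀ x ∈ Icc a b, stationaryEnergy ε u x = stationaryEnergy ε u a := by
  have hdu : Differentiable ℝ u := hu.differentiable two_ne_zero
  have hddu : Differentiable ℝ (deriv u) := hu.differentiable_deriv_two
  have hE x := hasDerivAt_stationaryEnergy ε (hdu x) (hddu x)
  refine constant_of_has_deriv_right_zero (fun x _ => (hE x).continuousAt.continuousWithinAt)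
    fun x hx => ?_
  simpa [hode x (Ico_subset_Icc_self hx)] using (hE x).hasDerivWithinAt

theorem hasDerivAt_const_add_mul_ofReal_sq (A B : ℂ) {u : ℝ → ℝ} {u' x : ℝ}
    (hu : HasDerivAt u u' x) :
    HasDerivAt (fun y => A + B * (u y : ℂ) ^ 2) (2 * B * u x * u') x := by
  have h := ((hu.ofReal_comp.fun_pow 2).const_mul B).const_add A
  exact h.congr_deriv (by push_cast; ring)

theorem deriv_const_add_mul_ofReal_sq (A B : ℂ) {u : ℝ → ℝ} (hu : Differentiable ℝ u) :
    deriv (fun y => A + B * (u y : ℂ) ^ 2) = fun x => 2 * B * u x * deriv u x :=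
  funext fun x => (hasDerivAt_const_add_mul_ofReal_sq A B (hu x).hasDerivAt).deriv

theorem deriv_deriv_const_add_mul_ofReal_sq (A B : ℂ) {u : ℝ → ℝ} {x : ℝ}
    (hu : Differentiable ℝ u) (hu' : DifferentiableAt ℝ (deriv u) x) :
    deriv (deriv fun y => A + B * (u y : ℂ) ^ 2) x
      = 2 * B * (deriv u x ^ 2 + u x * deriv (deriv u) x) := by
  rw [deriv_const_add_mul_ofReal_sq A B hu]
  have h := ((hu x).hasDerivAt.ofReal_comp.const_mul (2 * B)).fun_mul hu'.hasDerivAt.ofReal_comp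
  exact (h.congr_deriv (by ring)).deriv

theorem resolvent_identity {ε u u' u'' ρ lam D : ℂ}
    (hD : D = lam ^ 2 + 2 * lam - 3 * (1 - ρ ^ 2) ^ 2) (hD0 : D ≠ 0)
    (henergy : ε ^ 2 * u' ^ 2 + u ^ 2 - u ^ 4 / 2 = ρ ^ 2 - ρ ^ 4 / 2)
    (hode : ε ^ 2 * u'' + u - u ^ 3 = 0) :
    ε ^ 2 * (2 * (3 / D) * (u' ^ 2 + u * u''))
      + (1 - 3 * u ^ 2) * (-(3 + lam) / D + 3 / D * u ^ 2)
      - lam * (-(3 + lam) / D + 3 / D * u ^ 2) = 1 := by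
  field_simp
  linear_combination 6 * henergy + 6 * u * hode - hD

theorem stmt3_general (ε : ℝ) (u : ℝ → ℝ) (hu : ContDiff ℝ 2 u)
    (hode : ∀ x ∈ Set.Icc (0:ℝ) 1,
      ε ^ 2 * deriv (deriv u) x + u x - (u x) ^ 3 = 0)
    (hbc0 : deriv u 0 = 0) (hbc1 : deriv u 1 = 0)
    (ρ : ℝ) (hρ : ρ = u 0)
    (lam : ℂ) (hlam : lam ^ 2 + 2 * lam - 3 * (1 - (ρ:ℂ) ^ 2) ^ 2 ≠ 0)
    (φ : ℝ → ℂ)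
    (hφ : ∀ x : ℝ, φ x = (-(3 + lam) + 3 * (u x : ℂ) ^ 2)
        / (lam ^ 2 + 2 * lam - 3 * (1 - (ρ:ℂ) ^ 2) ^ 2)) :
    (∀ x ∈ Set.Icc (0:ℝ) 1,
      (ε : ℂ) ^ 2 * deriv (deriv φ) x + (1 - 3 * (u x : ℂ) ^ 2) * φ x - lam * φ x = 1) ∧
    deriv φ 0 = 0 ∧ deriv φ 1 = 0 := by
  set D := lam ^ 2 + 2 * lam - 3 * (1 - (ρ:ℂ) ^ 2) ^ 2 with hD
  obtain rfl : φ = fun y => -(3 + lam) / D + 3 / D * (u y : ℂ) ^ 2 :=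
    funext fun y => by rw [hφ]; ring
  have hdu : Differentiable ℝ u := hu.differentiable two_ne_zero
  refine ⟨fun x hx => ?_, ?_, ?_⟩
  · have henergy := stationaryEnergy_eq_of_ode hu hode x hx
    rw [stationaryEnergy, stationaryEnergy, hbc0, ← hρ] at henergy
    rw [deriv_deriv_const_add_mul_ofReal_sq _ _ hdu (hu.differentiable_deriv_two x)]
    refine resolvent_identity hD hlam ?_ (by exact_mod_cast hode x hx)
    exact_mod_cast henergy.trans (by ring)
  · simp [deriv_const_add_mul_ofReal_sq _ _ hdu, hbc0]
  · simp [deriv_const_add_mul_ofReal_sq _ _ hdu, hbc1]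

theorem stmt3 (ε : ℝ) (hε : 0 < ε) (u : ℝ → ℝ) (hu : ContDiff ℝ 2 u)
    (hode : ∀ x ∈ Set.Icc (0:ℝ) 1,
      ε ^ 2 * deriv (deriv u) x + u x - (u x) ^ 3 = 0)
    (hbc0 : deriv u 0 = 0) (hbc1 : deriv u 1 = 0)
    (ρ : ℝ) (hρ : ρ = u 0)
    (lam : ℂ) (hlam : lam ^ 2 + 2 * lam - 3 * (1 - (ρ:ℂ) ^ 2) ^ 2 ≠ 0)
    (φ : ℝ → ℂ)
    (hφ : ∀ x : ℝ, φ x = (-(3 + lam) + 3 * (u x : ℂ) ^ 2)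
        / (lam ^ 2 + 2 * lam - 3 * (1 - (ρ:ℂ) ^ 2) ^ 2)) :
    (∀ x ∈ Set.Icc (0:ℝ) 1,
      (ε : ℂ) ^ 2 * deriv (deriv φ) x + (1 - 3 * (u x : ℂ) ^ 2) * φ x - lam * φ x = 1) ∧
    deriv φ 0 = 0 ∧ deriv φ 1 = 0 :=
  stmt3_general ε u hu hode hbc0 hbc1 ρ hρ lam hlam φ hφ
end

section
/- Let ε > 0 and let u ∈ C²([0,1],ℝ) be a nonconstant solution of ε²u'' + u − u³ = 0 on [0,1] with u'(0) = u'(1) = 0; set ρ := u(0). Let λ ∈ ℝ be either −1 + √(1 + 3(1−ρ²)²) or −1 − √(1 + 3(1−ρ²)²) (so that λ² + 2λ − 3(1−ρ²)² = 0). Then the function ψ(x) := 3u(x)² − (3+λ) is not identically zero and satisfies ε²ψ''(x) + (1 − 3u(x)²)ψ(x) = λψ(x) for all x ∈ [0,1] with ψ'(0) = ψ'(1) = 0. Hence −1 ± √(1 + 3(1−ρ²)²) are eigenvalues of the Neumann linearized operator L := ε²∂ₓₓ + (1 − 3u²). -/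
/-!
Multiplying the equation by `u'` gives the first integral
`ε²u'² + u² − u⁴/2 ≡ ρ² − ρ⁴/2`, since `u'(0) = 0`. For `ψ = 3u² − c` one has
`ε²ψ'' = 6ε²u'² + 6u·ε²u''`, and eliminating `u'²` with the first integral and `u''` with the
equation shows that `ε²ψ'' + (1 − 3u²)ψ − λψ` is the constant `3(1 − ρ²)² − λ² − 2λ`, which
vanishes for both choices of `λ`. Finally `ψ ≡ 0` would make `u²` constant, hence `u` constant
by the intermediate value theorem.
-/

open Set

lemma IsPreconnected.apply_eq_apply_of_sq_eq {X : Type*} [TopologicalSpace X] {s : Set X}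
    (hs : IsPreconnected s) {f : X → ℝ} (hf : ContinuousOn f s) {x y : X} (hx : x ∈ s)
    (hy : y ∈ s) (hsq : ∀ z ∈ s, f z ^ 2 = f x ^ 2) : f x = f y := by
  rcases eq_or_ne (f x) 0 with h0 | h0
  · rw [h0, eq_comm, ← pow_eq_zero_iff two_ne_zero, hsq y hy, h0, zero_pow two_ne_zero]
  · exact (hs.eq_of_sq_eq hf continuousOn_const (fun z hz ↦ by simp [hsq z hz])
      (fun _ ↦ h0) hx rfl hy).symm

lemma ContDiff.differentiable_deriv_of_two {u : ℝ → ℝ} (hu : ContDiff ℝ 2 u) :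
    Differentiable ℝ (deriv u) := by
  simpa using hu.differentiable_iteratedDeriv 1 (by norm_num)

section AllenCahn

variable {ε : ℝ} {u : ℝ → ℝ}

noncomputable def allenCahnEnergy (ε : ℝ) (u : ℝ → ℝ) (x : ℝ) : ℝ :=
  ε ^ 2 * deriv u x ^ 2 + u x ^ 2 - u x ^ 4 / 2

lemma hasDerivAt_allenCahnEnergy (hu : ContDiff ℝ 2 u) (x : ℝ) :
    HasDerivAt (allenCahnEnergy ε u)
      (2 * deriv u x * (ε ^ 2 * deriv (deriv u) x + u x - u x ^ 3)) x := by
  have h1 : HasDerivAt u (deriv u x) x := (hu.differentiable two_ne_zero x).hasDerivAt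
  have h2 := (hu.differentiable_deriv_of_two x).hasDerivAt
  refine ((((h2.pow 2).const_mul (ε ^ 2)).add (h1.pow 2)).sub
    ((h1.pow 4).div_const 2)).congr_deriv ?_
  push_cast
  ring

lemma allenCahnEnergy_eq_left {a b : ℝ} (hu : ContDiff ℝ 2 u)
    (hode : ∀ x ∈ Icc a b, ε ^ 2 * deriv (deriv u) x + u x - u x ^ 3 = 0) :
    ∀ x ∈ Icc a b, allenCahnEnergy ε u x = allenCahnEnergy ε u a := by
  refine constant_of_has_deriv_right_zero
    (fun x _ ↦ (hasDerivAt_allenCahnEnergy hu x).continuousAt.continuousWithinAt) ?_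
  intro x hx
  have h := hasDerivAt_allenCahnEnergy (ε := ε) hu x
  rw [hode x (Ico_subset_Icc_self hx), mul_zero] at h
  exact h.hasDerivWithinAt

end AllenCahn

lemma hasDerivAt_three_mul_sq_sub {u : ℝ → ℝ} (hu : Differentiable ℝ u) (c x : ℝ) :
    HasDerivAt (fun x ↦ 3 * u x ^ 2 - c) (6 * u x * deriv u x) x := by
  refine ((((hu x).hasDerivAt.pow 2).const_mul 3).sub_const c).congr_deriv ?_
  push_cast
  ring

lemma deriv_deriv_three_mul_sq_sub {u : ℝ → ℝ} (hu : ContDiff ℝ 2 u) (c x : ℝ) :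
    deriv (deriv (fun x ↦ 3 * u x ^ 2 - c)) x
      = 6 * deriv u x ^ 2 + 6 * u x * deriv (deriv u) x := by
  have hud := hu.differentiable two_ne_zero
  rw [funext fun x ↦ (hasDerivAt_three_mul_sq_sub hud c x).deriv]
  exact ((((hud x).hasDerivAt.const_mul 6).mul
    (hu.differentiable_deriv_of_two x).hasDerivAt).congr_deriv (by ring)).deriv

theorem stmt4_general (ε : ℝ) (u : ℝ → ℝ) (hu : ContDiff ℝ 2 u)
    (hode : ∀ x ∈ Set.Icc (0:ℝ) 1,
      ε ^ 2 * deriv (deriv u) x + u x - (u x) ^ 3 = 0)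
    (hbc0 : deriv u 0 = 0) (hbc1 : deriv u 1 = 0)
    (hnc : ∃ x ∈ Set.Icc (0:ℝ) 1, ∃ x' ∈ Set.Icc (0:ℝ) 1, u x ≠ u x')
    (ρ : ℝ) (hρ : ρ = u 0)
    (lam : ℝ)
    (hlam : lam = -1 + Real.sqrt (1 + 3 * (1 - ρ ^ 2) ^ 2) ∨
            lam = -1 - Real.sqrt (1 + 3 * (1 - ρ ^ 2) ^ 2))
    (ψ : ℝ → ℝ) (hψ : ∀ x : ℝ, ψ x = 3 * (u x) ^ 2 - (3 + lam)) :
    (∃ x ∈ Set.Icc (0:ℝ) 1, ψ x ≠ 0) ∧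
    (∀ x ∈ Set.Icc (0:ℝ) 1,
      ε ^ 2 * deriv (deriv ψ) x + (1 - 3 * (u x) ^ 2) * ψ x = lam * ψ x) ∧
    deriv ψ 0 = 0 ∧ deriv ψ 1 = 0 := by
  obtain rfl : ψ = fun x ↦ 3 * u x ^ 2 - (3 + lam) := funext hψ
  have hud := hu.differentiable two_ne_zero
  have hlam_sq : lam ^ 2 + 2 * lam = 3 * (1 - ρ ^ 2) ^ 2 := by
    have hs := Real.sq_sqrt (show (0 : ℝ) ≤ 1 + 3 * (1 - ρ ^ 2) ^ 2 by positivity)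
    rcases hlam with rfl | rfl <;> linear_combination hs
  refine ⟨?_, fun x hx ↦ ?_, ?_, ?_⟩
  · obtain ⟨x, hx, x', hx', hne⟩ := hnc
    by_contra! hψ0
    refine hne <| isPreconnected_Icc.apply_eq_apply_of_sq_eq hud.continuous.continuousOn hx hx'
      fun z hz ↦ ?_
    linear_combination (hψ0 z hz - hψ0 x hx) / 3
  · have hE := allenCahnEnergy_eq_left hu hode x hx
    simp only [allenCahnEnergy, hbc0, ← hρ] at hE
    rw [deriv_deriv_three_mul_sq_sub hu]
    linear_combination 6 * hE + 6 * u x * hode x hx + hlam_sq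
  · simp [(hasDerivAt_three_mul_sq_sub hud _ 0).deriv, hbc0]
  · simp [(hasDerivAt_three_mul_sq_sub hud _ 1).deriv, hbc1]

theorem stmt4 (ε : ℝ) (hε : 0 < ε) (u : ℝ → ℝ) (hu : ContDiff ℝ 2 u)
    (hode : ∀ x ∈ Set.Icc (0:ℝ) 1,
      ε ^ 2 * deriv (deriv u) x + u x - (u x) ^ 3 = 0)
    (hbc0 : deriv u 0 = 0) (hbc1 : deriv u 1 = 0)
    (hnc : ∃ x ∈ Set.Icc (0:ℝ) 1, ∃ x' ∈ Set.Icc (0:ℝ) 1, u x ≠ u x')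
    (ρ : ℝ) (hρ : ρ = u 0)
    (lam : ℝ)
    (hlam : lam = -1 + Real.sqrt (1 + 3 * (1 - ρ ^ 2) ^ 2) ∨
            lam = -1 - Real.sqrt (1 + 3 * (1 - ρ ^ 2) ^ 2))
    (ψ : ℝ → ℝ) (hψ : ∀ x : ℝ, ψ x = 3 * (u x) ^ 2 - (3 + lam)) :
    (∃ x ∈ Set.Icc (0:ℝ) 1, ψ x ≠ 0) ∧
    (∀ x ∈ Set.Icc (0:ℝ) 1,
      ε ^ 2 * deriv (deriv ψ) x + (1 - 3 * (u x) ^ 2) * ψ x = lam * ψ x) ∧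
    deriv ψ 0 = 0 ∧ deriv ψ 1 = 0 :=
  stmt4_general ε u hu hode hbc0 hbc1 hnc ρ hρ lam hlam ψ hψ
end

section
/- Let n be a positive integer and, for each ε ∈ (0, 1/(nπ)), let k(ε) ∈ (0,1) denote the unique solution of √(1+k²)·K(k) = 1/(2nε). Then (1 − k(ε)²)·exp(1/(√2·n·ε)) → 16 as ε → 0⁺. -/
open Real Filter Set

/-!
Write `a = √(1 - k²)`. The substitution `s = t / √(1 + t²)` turns `K(k)` into
`∫₀^∞ dt / (√(1 + t²) √(1 + a² t²))`, and the involution `t ↦ 1 / (a t)` shows that this is twice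
the integral over `(0, 1/√a)`. There `1 ≤ √(1 + a² t²) ≤ √(1 + a)`, so with `L = arsinh (1/√a)`,
which satisfies `a² exp (4 L) = (1 + √(1 + a))⁴`, we get `2 L / √(1 + a) ≤ K(k) ≤ 2 L`.
Since `1 / (√2 n ε) = √(2 (1 + k²)) K(k)` and `(2 - a) √(1 + a) ≤ √(2 (1 + k²)) ≤ 2`, and since
`a L ≤ √a` because `arsinh x ≤ x`, the quantity `(1 - k²) exp (1 / (√2 n ε))` lies between
`(1 + √(1 + a))⁴ exp (-2 √a)` and `(1 + √(1 + a))⁴`. The upper bound forces `a → 0`, and then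
both bounds tend to `16`.
-/

open MeasureTheory Topology

noncomputable def KintTan (a t : ℝ) : ℝ :=
  1 / (√(1 + t ^ 2) * √(1 + a ^ 2 * t ^ 2))

lemma continuous_KintTan (a : ℝ) : Continuous (KintTan a) :=
  continuous_const.div (by fun_prop) fun t => (by positivity)

lemma one_sub_sq_div_sqrt_one_add_sq (t : ℝ) :
    1 - (t / √(1 + t ^ 2)) ^ 2 = (1 + t ^ 2)⁻¹ := by
  rw [div_pow, sq_sqrt (by positivity)]
  field_simp
  ring

lemma one_add_sq_div_sqrt_one_sub_sq {s : ℝ} (hs : s ^ 2 < 1) :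
    1 + (s / √(1 - s ^ 2)) ^ 2 = (1 - s ^ 2)⁻¹ := by
  rw [div_pow, sq_sqrt (by linarith)]
  field_simp [(by linarith : 1 - s ^ 2 ≠ 0)]
  ring

lemma hasDerivAt_div_sqrt_one_add_sq (t : ℝ) :
    HasDerivAt (fun t => t / √(1 + t ^ 2)) (1 / ((1 + t ^ 2) * √(1 + t ^ 2))) t := by
  have h0 : 0 < 1 + t ^ 2 := by positivity
  have hsqrt : HasDerivAt (fun t => √(1 + t ^ 2)) (t / √(1 + t ^ 2)) t := by
    convert ((hasDerivAt_pow 2 t).const_add 1).sqrt h0.ne' using 1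
    field_simp
    norm_num
    ring
  refine ((hasDerivAt_id' t).div hsqrt (sqrt_pos.2 h0).ne').congr_deriv ?_
  field_simp
  rw [sq_sqrt h0.le]
  ring

lemma image_div_sqrt_one_add_sq_Ioi :
    (fun t => t / √(1 + t ^ 2)) '' Ioi 0 = Ioo 0 1 := by
  ext s
  constructor
  · rintro ⟨t, ht, rfl⟩
    have ht : 0 < t := ht
    refine ⟨by positivity, (div_lt_one (by positivity)).2 ?_⟩
    exact (lt_sqrt ht.le).2 (by linarith)
  · rintro ⟨hs0, hs1⟩
    have hs : s ^ 2 < 1 := by nlinarith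
    have hp : 0 < √(1 - s ^ 2) := sqrt_pos.2 (by linarith)
    refine ⟨s / √(1 - s ^ 2), div_pos hs0 hp, ?_⟩
    simp only [one_add_sq_div_sqrt_one_sub_sq hs, sqrt_inv]
    field_simp

lemma injective_div_sqrt_one_add_sq : Function.Injective fun t : ℝ => t / √(1 + t ^ 2) := by
  refine Function.LeftInverse.injective (g := fun s => s / √(1 - s ^ 2)) fun t => ?_
  simp only [one_sub_sq_div_sqrt_one_add_sq, sqrt_inv]
  field_simp

lemma Kint_eq_integral_Ioi_KintTan {k a : ℝ} (hk : k ^ 2 + a ^ 2 = 1) :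
    Kint k = ∫ t in Ioi 0, KintTan a t := by
  rw [Kint, intervalIntegral.integral_of_le zero_le_one, integral_Ioc_eq_integral_Ioo,
    ← image_div_sqrt_one_add_sq_Ioi,
    integral_image_eq_integral_abs_deriv_smul measurableSet_Ioi
      (fun t _ => (hasDerivAt_div_sqrt_one_add_sq t).hasDerivWithinAt)
      injective_div_sqrt_one_add_sq.injOn]
  refine setIntegral_congr_fun measurableSet_Ioi fun t _ => ?_
  have h0 : 0 < 1 + t ^ 2 := by positivity
  have hmod : 1 - k ^ 2 * (t / √(1 + t ^ 2)) ^ 2 = (1 + a ^ 2 * t ^ 2) / (1 + t ^ 2) := by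
    rw [div_pow, sq_sqrt h0.le, show k ^ 2 = 1 - a ^ 2 by linarith]
    field_simp
    ring
  rw [smul_eq_mul, one_sub_sq_div_sqrt_one_add_sq, hmod, abs_of_pos (by positivity), KintTan,
    ← div_eq_inv_mul, div_div, ← sq, sqrt_div (by positivity), sqrt_sq h0.le]
  field_simp

section

variable {a X : ℝ}

lemma image_inv_mul_Ioo (ha : 0 < a) :
    (fun t => (a * t)⁻¹) '' Ioo 0 (√a)⁻¹ = Ioi (√a)⁻¹ := by
  have hsa : 0 < √a := sqrt_pos.2 ha
  have hlt : ∀ {t}, 0 < t → (t < (√a)⁻¹ ↔ (√a)⁻¹ < (a * t)⁻¹) := fun {t} ht => by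
    have hat : a * t = √a * (√a * t) := by rw [← mul_assoc, mul_self_sqrt ha.le]
    rw [inv_lt_inv₀ hsa (by positivity), ← one_div, lt_div_iff₀ hsa, hat,
      mul_lt_iff_lt_one_right hsa, mul_comm]
  ext u
  constructor
  · rintro ⟨t, ⟨ht0, htX⟩, rfl⟩
    exact (hlt ht0).1 htX
  · intro hu
    have hu0 : 0 < u := (inv_pos.2 hsa).trans hu
    refine ⟨(a * u)⁻¹, ⟨by positivity, (hlt (by positivity)).2 ?_⟩, ?_⟩ <;>
      simp only [mul_inv, inv_inv, mul_inv_cancel_left₀ ha.ne']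
    exact hu

lemma abs_deriv_mul_KintTan_inv_mul (ha : 0 < a) {t : ℝ} (ht : 0 < t) :
    |-(a * t ^ 2)⁻¹| * KintTan a (a * t)⁻¹ = KintTan a t := by
  have h1 : 1 + (a * t)⁻¹ ^ 2 = (1 + a ^ 2 * t ^ 2) / (a * t) ^ 2 := by
    field_simp
    ring
  have h2 : 1 + a ^ 2 * (a * t)⁻¹ ^ 2 = (1 + t ^ 2) / t ^ 2 := by
    field_simp
    ring
  rw [abs_neg, abs_of_pos (by positivity), KintTan, KintTan, h1, h2,
    sqrt_div (by positivity), sqrt_div (by positivity), sqrt_sq (by positivity),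
    sqrt_sq ht.le]
  field_simp

lemma integral_Ioi_KintTan_eq_two_mul (ha : 0 < a) :
    ∫ t in Ioi 0, KintTan a t = 2 * ∫ t in Ioo 0 (√a)⁻¹, KintTan a t := by
  have hX : 0 < (√a)⁻¹ := inv_pos.2 (sqrt_pos.2 ha)
  have hderiv : ∀ t ∈ Ioo 0 (√a)⁻¹,
      HasDerivWithinAt (fun t => (a * t)⁻¹) (-(a * t ^ 2)⁻¹) (Ioo 0 (√a)⁻¹) t :=
    fun t ht => by
      refine (((hasDerivAt_id' t).const_mul a).inv (mul_pos ha ht.1).ne').hasDerivWithinAt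
        |>.congr_deriv ?_
      field_simp
  have hinj : InjOn (fun t => (a * t)⁻¹) (Ioo 0 (√a)⁻¹) := fun x _ y _ h => by
    simpa [ha.ne'] using h
  have hcongr : EqOn (fun t => |-(a * t ^ 2)⁻¹| • KintTan a (a * t)⁻¹) (KintTan a)
      (Ioo 0 (√a)⁻¹) := fun t ht => abs_deriv_mul_KintTan_inv_mul ha ht.1
  have hIoo : IntegrableOn (KintTan a) (Ioo 0 (√a)⁻¹) :=
    (continuous_KintTan a).integrableOn_Icc.mono_set Ioo_subset_Icc_self
  have hIoi : IntegrableOn (KintTan a) (Ioi (√a)⁻¹) := by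
    rw [← image_inv_mul_Ioo ha,
      integrableOn_image_iff_integrableOn_abs_deriv_smul measurableSet_Ioo hderiv hinj]
    exact hIoo.congr_fun hcongr.symm measurableSet_Ioo
  have hsymm : ∫ t in Ioi (√a)⁻¹, KintTan a t = ∫ t in Ioo 0 (√a)⁻¹, KintTan a t := by
    rw [← image_inv_mul_Ioo ha,
      integral_image_eq_integral_abs_deriv_smul measurableSet_Ioo hderiv hinj]
    exact setIntegral_congr_fun measurableSet_Ioo hcongr
  have hdisj : Disjoint (Ioo 0 (√a)⁻¹) (Ici (√a)⁻¹) :=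
    (Iio_disjoint_Ici le_rfl).mono_left Ioo_subset_Iio_self
  rw [← Ioo_union_Ici_eq_Ioi hX, setIntegral_union hdisj measurableSet_Ici hIoo
    ((integrableOn_Ici_iff_integrableOn_Ioi (by simp)).2 hIoi), integral_Ici_eq_integral_Ioi,
    hsymm, two_mul]

lemma continuous_inv_sqrt_one_add_sq : Continuous fun t : ℝ => (√(1 + t ^ 2))⁻¹ :=
  (by fun_prop : Continuous fun t : ℝ => √(1 + t ^ 2)).inv₀ fun t => by positivity

lemma integral_Ioo_inv_sqrt_one_add_sq {X : ℝ} (hX : 0 ≤ X) :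
    ∫ t in Ioo 0 X, (√(1 + t ^ 2))⁻¹ = arsinh X := by
  rw [← integral_Ioc_eq_integral_Ioo, ← intervalIntegral.integral_of_le hX,
    intervalIntegral.integral_eq_sub_of_hasDerivAt (fun x _ => hasDerivAt_arsinh x)
      (continuous_inv_sqrt_one_add_sq.intervalIntegrable 0 X), arsinh_zero, sub_zero]

lemma integral_KintTan_le_arsinh (hX : 0 ≤ X) :
    ∫ t in Ioo 0 X, KintTan a t ≤ arsinh X := by
  rw [← integral_Ioo_inv_sqrt_one_add_sq hX]
  refine setIntegral_mono_on
    ((continuous_KintTan a).integrableOn_Icc.mono_set Ioo_subset_Icc_self)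
    (continuous_inv_sqrt_one_add_sq.integrableOn_Icc.mono_set Ioo_subset_Icc_self)
    measurableSet_Ioo fun t _ => ?_
  rw [KintTan, one_div, mul_inv]
  refine mul_le_of_le_one_right (by positivity) (inv_le_one_of_one_le₀ ?_)
  exact one_le_sqrt.2 (by nlinarith [sq_nonneg (a * t)])

lemma arsinh_div_le_integral_KintTan (hX : 0 ≤ X) :
    arsinh X / √(1 + a ^ 2 * X ^ 2) ≤ ∫ t in Ioo 0 X, KintTan a t := by
  rw [← integral_Ioo_inv_sqrt_one_add_sq hX, div_eq_mul_inv, ← integral_mul_const]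
  refine setIntegral_mono_on
    ((continuous_inv_sqrt_one_add_sq.mul continuous_const).integrableOn_Icc.mono_set
      Ioo_subset_Icc_self)
    ((continuous_KintTan a).integrableOn_Icc.mono_set Ioo_subset_Icc_self)
    measurableSet_Ioo fun t ht => ?_
  rw [KintTan, one_div, mul_inv]
  gcongr
  exacts [ht.1.le, ht.2.le]

end

section

variable {k a : ℝ}

lemma arsinh_inv_sqrt_nonneg (a : ℝ) : 0 ≤ arsinh (√a)⁻¹ :=
  arsinh_nonneg_iff.2 (by positivity)

lemma Kint_le_two_mul_arsinh (hk : k ^ 2 + a ^ 2 = 1) (ha : 0 < a) :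
    Kint k ≤ 2 * arsinh (√a)⁻¹ := by
  rw [Kint_eq_integral_Ioi_KintTan hk, integral_Ioi_KintTan_eq_two_mul ha]
  gcongr
  exact integral_KintTan_le_arsinh (by positivity)

lemma two_mul_arsinh_div_le_Kint (hk : k ^ 2 + a ^ 2 = 1) (ha : 0 < a) :
    2 * arsinh (√a)⁻¹ / √(1 + a) ≤ Kint k := by
  have hX : a ^ 2 * (√a)⁻¹ ^ 2 = a := by
    rw [inv_pow, sq_sqrt ha.le]
    field_simp
  rw [Kint_eq_integral_Ioi_KintTan hk, integral_Ioi_KintTan_eq_two_mul ha, mul_div_assoc]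
  gcongr
  simpa only [hX] using arsinh_div_le_integral_KintTan (a := a) (by positivity : 0 ≤ (√a)⁻¹)

lemma arsinh_le_self {x : ℝ} (hx : 0 ≤ x) : arsinh x ≤ x := by
  rwa [← sinh_le_sinh, sinh_arsinh, self_le_sinh_iff]

lemma sq_mul_exp_four_mul_arsinh_inv_sqrt (ha : 0 < a) :
    a ^ 2 * exp (4 * arsinh (√a)⁻¹) = (1 + √(1 + a)) ^ 4 := by
  have hsa : 0 < √a := sqrt_pos.2 ha
  have hexp : exp (arsinh (√a)⁻¹) = (1 + √(1 + a)) / √a := by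
    have h1 : 1 + a⁻¹ = (1 + a) / a := by field_simp; ring
    rw [exp_arsinh, inv_pow, sq_sqrt ha.le, h1, sqrt_div (by positivity)]
    field_simp
  rw [show (4 : ℝ) = (4 : ℕ) by norm_num, exp_nat_mul, hexp, div_pow,
    show √a ^ 4 = a ^ 2 by rw [show 4 = 2 * 2 by rfl, pow_mul, sq_sqrt ha.le]]
  field_simp

lemma sqrt_two_mul_sqrt_mul_Kint_le (hk : k ^ 2 + a ^ 2 = 1) (ha : 0 < a) :
    √2 * √(1 + k ^ 2) * Kint k ≤ 4 * arsinh (√a)⁻¹ := by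
  have hK : 0 ≤ Kint k :=
    le_trans (by have := arsinh_inv_sqrt_nonneg a; positivity) (two_mul_arsinh_div_le_Kint hk ha)
  have hc : √2 * √(1 + k ^ 2) ≤ 2 := by
    rw [← sqrt_mul zero_le_two, sqrt_le_left zero_le_two]
    nlinarith
  calc √2 * √(1 + k ^ 2) * Kint k ≤ 2 * (2 * arsinh (√a)⁻¹) := by
        gcongr
        exact Kint_le_two_mul_arsinh hk ha
    _ = 4 * arsinh (√a)⁻¹ := by ring

lemma four_mul_arsinh_sub_le_sqrt_two_mul_sqrt_mul_Kint (hk : k ^ 2 + a ^ 2 = 1) (ha : 0 < a) :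
    4 * arsinh (√a)⁻¹ - 2 * √a ≤ √2 * √(1 + k ^ 2) * Kint k := by
  have hsa : 0 < √(1 + a) := sqrt_pos.2 (by positivity)
  have ha1 : a ≤ 1 := by nlinarith
  have hc : (2 - a) * √(1 + a) ≤ √2 * √(1 + k ^ 2) := by
    rw [← sqrt_mul zero_le_two, le_sqrt (by nlinarith) (by positivity), mul_pow,
      sq_sqrt (by positivity)]
    nlinarith
  have hL : a * arsinh (√a)⁻¹ ≤ √a :=
    calc a * arsinh (√a)⁻¹ ≤ a * (√a)⁻¹ := by gcongr; exact arsinh_le_self (by positivity)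
      _ = √a := by rw [← div_eq_mul_inv, div_sqrt]
  have := arsinh_inv_sqrt_nonneg a
  calc 4 * arsinh (√a)⁻¹ - 2 * √a ≤ 4 * arsinh (√a)⁻¹ - 2 * (a * arsinh (√a)⁻¹) := by
        linarith
    _ = (2 - a) * √(1 + a) * (2 * arsinh (√a)⁻¹ / √(1 + a)) := by
        field_simp
        ring
    _ ≤ √2 * √(1 + k ^ 2) * Kint k := by
        gcongr
        exact two_mul_arsinh_div_le_Kint hk ha

lemma one_sub_sq_mul_exp_Kint_mem_Icc (hk : k ^ 2 < 1) :
    (1 - k ^ 2) * exp (√2 * √(1 + k ^ 2) * Kint k) ∈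
      Icc ((1 + √(1 + √(1 - k ^ 2))) ^ 4 * exp (-(2 * √√(1 - k ^ 2))))
        ((1 + √(1 + √(1 - k ^ 2))) ^ 4) := by
  set a := √(1 - k ^ 2)
  have ha : 0 < a := sqrt_pos.2 (by linarith)
  have ha2 : a ^ 2 = 1 - k ^ 2 := sq_sqrt (by linarith)
  have hka : k ^ 2 + a ^ 2 = 1 := by linarith
  rw [← ha2, ← sq_mul_exp_four_mul_arsinh_inv_sqrt ha, mul_assoc (a ^ 2), ← exp_add,
    ← sub_eq_add_neg]
  exact ⟨by gcongr _ * exp ?_; exact four_mul_arsinh_sub_le_sqrt_two_mul_sqrt_mul_Kint hka ha,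
    by gcongr a ^ 2 * exp ?_; exact sqrt_two_mul_sqrt_mul_Kint_le hka ha⟩

end

lemma tendsto_one_div_mul_nhdsGT_zero_atTop {c : ℝ} (hc : 0 < c) :
    Tendsto (fun ε => 1 / (c * ε)) (𝓝[>] 0) atTop := by
  refine (tendsto_inv_nhdsGT_zero.const_mul_atTop (inv_pos.2 hc)).congr fun ε => ?_
  rw [one_div, mul_inv]

lemma tendsto_zero_of_mul_exp_le {α : Type*} {l : Filter α} {x u : α → ℝ} {C : ℝ}
    (hu : Tendsto u l atTop) (hx : ∀ᶠ e in l, 0 ≤ x e ∧ x e * exp (u e) ≤ C) :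
    Tendsto x l (𝓝 0) := by
  have hC : Tendsto (fun e => C * exp (-u e)) l (𝓝 0) := by
    simpa using (tendsto_exp_neg_atTop_nhds_zero.comp hu).const_mul C
  refine tendsto_of_tendsto_of_tendsto_of_le_of_le' tendsto_const_nhds hC
    (hx.mono fun e he => he.1) (hx.mono fun e he => ?_)
  rw [exp_neg, ← div_eq_mul_inv, le_div_iff₀ (exp_pos _)]
  exact he.2

theorem stmt7 (n : ℕ) (hn : 0 < n) (k : ℝ → ℝ)
    (hk : ∀ ε ∈ Set.Ioo (0:ℝ) (1 / (n * Real.pi)),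
      k ε ∈ Set.Ioo (0:ℝ) 1 ∧
      Real.sqrt (1 + (k ε) ^ 2) * Kint (k ε) = 1 / (2 * n * ε)) :
    Filter.Tendsto
      (fun ε : ℝ => (1 - (k ε) ^ 2) * Real.exp (1 / (Real.sqrt 2 * n * ε)))
      (nhdsWithin 0 (Set.Ioo (0:ℝ) (1 / (n * Real.pi))))
      (nhds 16) := by
  set S := Ioo (0:ℝ) (1 / (n * π))
  have hn₀ : (0:ℝ) < n := Nat.cast_pos.2 hn
  have hbound : ∀ ε ∈ S, (1 - k ε ^ 2) * exp (1 / (√2 * n * ε)) ∈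
      Icc ((1 + √(1 + √(1 - k ε ^ 2))) ^ 4 * exp (-(2 * √√(1 - k ε ^ 2))))
        ((1 + √(1 + √(1 - k ε ^ 2))) ^ 4) := by
    intro ε hε
    obtain ⟨⟨hk0, hk1⟩, hK⟩ := hk ε hε
    have hscale : 1 / (√2 * n * ε) = √2 * √(1 + k ε ^ 2) * Kint (k ε) := by
      rw [mul_assoc √2 √(1 + k ε ^ 2), hK]
      field_simp
      rw [sq_sqrt zero_le_two]
    rw [hscale]
    exact one_sub_sq_mul_exp_Kint_mem_Icc (by nlinarith)
  have hu : Tendsto (fun ε => 1 / (√2 * n * ε)) (𝓝[S] 0) atTop :=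
    (tendsto_one_div_mul_nhdsGT_zero_atTop (by positivity)).mono_left
      (nhdsWithin_mono _ Ioo_subset_Ioi_self)
  have hx : Tendsto (fun ε => 1 - k ε ^ 2) (𝓝[S] 0) (𝓝 0) := by
    refine tendsto_zero_of_mul_exp_le (C := (1 + √(1 + √1)) ^ 4) hu ?_
    filter_upwards [self_mem_nhdsWithin] with ε hε
    obtain ⟨⟨hk0, hk1⟩, -⟩ := hk ε hε
    refine ⟨by nlinarith, (hbound ε hε).2.trans ?_⟩
    gcongr
    nlinarith
  have hlim : ∀ g : ℝ → ℝ, Continuous g → g 0 = 16 →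
      Tendsto (fun ε => g (1 - k ε ^ 2)) (𝓝[S] 0) (𝓝 16) :=
    fun g hg hg0 => hg0 ▸ (hg.tendsto 0).comp hx
  refine tendsto_of_tendsto_of_tendsto_of_le_of_le'
    (hlim (fun x => (1 + √(1 + √x)) ^ 4 * exp (-(2 * √√x))) (by fun_prop) (by norm_num))
    (hlim (fun x => (1 + √(1 + √x)) ^ 4) (by fun_prop) (by norm_num)) ?_ ?_ <;>
    filter_upwards [self_mem_nhdsWithin] with ε hε
  exacts [(hbound ε hε).1, (hbound ε hε).2]
end

section
/- Let γ, δ > 0 and let a, b be real numbers with b > 0 and δ·a > b. Set Q := 2(δ+2) − 3δa, D := Q² + 24(δ+2)b, τ_* := 2(δ+2)γ/(√D − Q), and m := (√D − Q)/2 − 3b. Then √D − Q > 0 and m > 0, so τ_* > 0 and μ_* := √m > 0 are well defined; the purely imaginary number iμ_* satisfies g(iμ_*, τ_*) = 0; and, conversely, for every τ > 0 and μ ∈ ℝ with g(iμ, τ) = 0, one has μ ≠ 0, τ = τ_*, and μ = ±μ_*. In particular, τ_* is the unique value of τ > 0 for which the cubic g(·,τ) has a purely imaginary root. -/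
/-!
On the imaginary axis the real and imaginary parts of `g(iμ, τ)` give, with `s = τ / γ` and
`x = μ²`, the system `(2s + 1) x = 3(δa - b)` and `μ (δ + 2 - s (3b + x)) = 0`. The first
equation forces `μ ≠ 0`, so `s (3b + x) = δ + 2`; eliminating `s` leaves the quadratic
`x² + (Q + 6b) x - 9b(δa - b) = 0`, whose discriminant is `D` and whose only positive root is `m`.
Then `s = (δ + 2) / (3b + m)` and `3b + m = (√D - Q) / 2` give `τ = τ_*`.
-/

open Real Complex

lemma ofReal_cubic_eval_I_mul_eq_zero_iff (c₃ c₂ c₁ c₀ μ : ℝ) :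
    (c₃ : ℂ) * (I * μ) ^ 3 + (c₂ : ℂ) * (I * μ) ^ 2 + (c₁ : ℂ) * (I * μ) + (c₀ : ℂ) = 0 ↔
      c₂ * μ ^ 2 = c₀ ∧ μ * (c₁ - c₃ * μ ^ 2) = 0 := by
  have h : (c₃ : ℂ) * (I * μ) ^ 3 + (c₂ : ℂ) * (I * μ) ^ 2 + (c₁ : ℂ) * (I * μ) + (c₀ : ℂ) =
      ((c₀ - c₂ * μ ^ 2 : ℝ) : ℂ) + ((μ * (c₁ - c₃ * μ ^ 2) : ℝ) : ℂ) * I := by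
    push_cast
    linear_combination (c₂ * μ ^ 2 + c₃ * μ ^ 3 * I) * I_sq
  rw [h, ← mk_eq_add_mul_I, Complex.ext_iff, zero_re, zero_im, sub_eq_zero, eq_comm]

noncomputable def quadPosRoot (p c : ℝ) : ℝ := (√(p ^ 2 + 4 * c) - p) / 2

section quadPosRoot

variable {p c : ℝ}

lemma quadPosRoot_pos (hc : 0 < c) : 0 < quadPosRoot p c := by
  have : p < √(p ^ 2 + 4 * c) := lt_sqrt_of_sq_lt (by linarith)
  unfold quadPosRoot
  linarith

lemma quadPosRoot_sq_add_mul (hc : 0 ≤ c) : quadPosRoot p c ^ 2 + p * quadPosRoot p c = c := by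
  unfold quadPosRoot
  linear_combination (1 / 4 : ℝ) * sq_sqrt (by positivity : 0 ≤ p ^ 2 + 4 * c)

lemma eq_quadPosRoot {x : ℝ} (hc : 0 ≤ c) (hx : 0 < x) (h : x ^ 2 + p * x = c) :
    x = quadPosRoot p c := by
  have hroot := quadPosRoot_sq_add_mul (p := p) hc
  have hfac : (x - quadPosRoot p c) * (x + quadPosRoot p c + p) = 0 := by
    linear_combination h - hroot
  rcases mul_eq_zero.mp hfac with h | h
  · linarith
  · have : -√(p ^ 2 + 4 * c) ≤ p := neg_sqrt_le_of_sq_le (by linarith)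
    unfold quadPosRoot at h
    linarith

end quadPosRoot

/-- Eliminating `s` by `hs` turns the equation on the left into `x ^ 2 + p * x = c`. -/
lemma eq_quadPosRoot_iff_of_mul_eq {δ a b s x : ℝ} (hb : 0 < b) (hab : b < δ * a) (hx : 0 < x)
    (hs : s * (3 * b + x) = δ + 2) :
    (2 * s + 1) * x = 3 * δ * a - 3 * b ↔
      x = quadPosRoot (2 * (δ + 2) - 3 * δ * a + 6 * b) (9 * b * (δ * a - b)) := by
  have hc : 0 < 9 * b * (δ * a - b) := mul_pos (by positivity) (sub_pos.2 hab)
  have h3bx : 3 * b + x ≠ 0 := by positivity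
  constructor
  · intro h
    exact eq_quadPosRoot hc.le hx (by linear_combination (3 * b + x) * h - 2 * x * hs)
  · intro h
    have hquad := quadPosRoot_sq_add_mul (p := 2 * (δ + 2) - 3 * δ * a + 6 * b) hc.le
    rw [← h] at hquad
    apply mul_right_cancel₀ h3bx
    linear_combination 2 * x * hs + hquad

theorem stmt10 (γ δ a b : ℝ) (hγ : 0 < γ) (hδ : 0 < δ) (hb : 0 < b) (hab : b < δ * a)
    (g : ℂ → ℝ → ℂ)
    (hg : ∀ (lam : ℂ) (τ : ℝ), g lam τ =
      ((τ / γ : ℝ) : ℂ) * lam ^ 3 + ((2 * τ / γ + 1 : ℝ) : ℂ) * lam ^ 2 +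
      ((δ + 2 - 3 * (τ / γ) * b : ℝ) : ℂ) * lam + ((3 * δ * a - 3 * b : ℝ) : ℂ))
    (Q D τs m μs : ℝ)
    (hQ : Q = 2 * (δ + 2) - 3 * δ * a)
    (hD : D = Q ^ 2 + 24 * (δ + 2) * b)
    (hτs : τs = 2 * (δ + 2) * γ / (Real.sqrt D - Q))
    (hm : m = (Real.sqrt D - Q) / 2 - 3 * b)
    (hμs : μs = Real.sqrt m) :
    0 < Real.sqrt D - Q ∧ 0 < m ∧ 0 < τs ∧ 0 < μs ∧
    g (Complex.I * (μs : ℂ)) τs = 0 ∧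
    (∀ τ : ℝ, 0 < τ → ∀ μ : ℝ, g (Complex.I * (μ : ℂ)) τ = 0 →
      μ ≠ 0 ∧ τ = τs ∧ (μ = μs ∨ μ = -μs)) := by
  have key : ∀ τ μ : ℝ, g (I * μ) τ = 0 ↔ (2 * (τ / γ) + 1) * μ ^ 2 = 3 * δ * a - 3 * b ∧
      μ * (δ + 2 - τ / γ * (3 * b + μ ^ 2)) = 0 := fun τ μ => by
    rw [hg, ofReal_cubic_eval_I_mul_eq_zero_iff]
    ring_nf
  have hm_root : m = quadPosRoot (2 * (δ + 2) - 3 * δ * a + 6 * b) (9 * b * (δ * a - b)) := by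
    rw [hm, quadPosRoot, hD, hQ]
    ring_nf
  have hm0 : 0 < m := hm_root ▸ quadPosRoot_pos (mul_pos (by positivity) (sub_pos.2 hab))
  have hS : √D - Q = 2 * (3 * b + m) := by rw [hm]; ring
  have hτs_eq : τs / γ * (3 * b + m) = δ + 2 := by rw [hτs, hS]; field_simp
  have hμs_sq : μs ^ 2 = m := hμs ▸ sq_sqrt hm0.le
  have hμs0 : 0 < μs := hμs ▸ sqrt_pos.2 hm0
  refine ⟨by rw [hS]; positivity, hm0, by rw [hτs, hS]; positivity, hμs0, ?_, ?_⟩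
  · rw [key, hμs_sq]
    refine ⟨(eq_quadPosRoot_iff_of_mul_eq hb hab hm0 hτs_eq).2 hm_root, ?_⟩
    rw [hτs_eq, sub_self, mul_zero]
  · intro τ _ μ hμ
    obtain ⟨hre, him⟩ := (key τ μ).1 hμ
    have hμ0 : μ ≠ 0 := by
      rintro rfl
      linarith
    have hτ_eq : τ / γ * (3 * b + μ ^ 2) = δ + 2 :=
      (sub_eq_zero.1 ((mul_eq_zero.1 him).resolve_left hμ0)).symm
    have hμ_sq : μ ^ 2 = m :=
      hm_root ▸ (eq_quadPosRoot_iff_of_mul_eq hb hab (by positivity) hτ_eq).1 hre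
    rw [hμ_sq, ← hτs_eq] at hτ_eq
    refine ⟨hμ0, ?_, sq_eq_sq_iff_eq_or_eq_neg.1 (hμ_sq.trans hμs_sq.symm)⟩
    exact (div_left_inj' hγ.ne').1 (mul_right_cancel₀ (by positivity) hτ_eq)
end

section
/- Let γ, δ > 0 and let a, b be real numbers with b > 0 and δ·a > b. Set Q := 2(δ+2) − 3δa, D := Q² + 24(δ+2)b, τ_* := 2(δ+2)γ/(√D − Q), μ_* := √((√D − Q)/2 − 3b), and define g_λ(λ,τ) := 3(τ/γ)λ² + 2(2τ/γ + 1)λ + (δ + 2 − 3(τ/γ)b) and g_τ(λ,τ) := (1/γ)λ³ + (2/γ)λ² − (3/γ)bλ (the partial derivatives of g with respect to λ and τ). Then g_λ(iμ_*, τ_*) ≠ 0, and the complex number w := −g_τ(iμ_*, τ_*)/g_λ(iμ_*, τ_*) satisfies Re(w) > 0 and Im(w) < 0. (This is the transversality condition: the pair of complex roots of g crosses the imaginary axis with positive speed at τ = τ_*.) -/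
/-!
Writing `t = τ/γ`, the imaginary part of `g(iμ, τ) = 0` says `δ + 2 - 3tb = tμ²`, and this
holds at `(μ_*, τ_*)`. With it, `g_λ(iμ, τ) = -2tμ² + 2(2t + 1)μ i` and
`-γ g_τ(iμ, τ) = 2μ² + μ(μ² + 3b) i`, so the signs of `Re w` and `Im w`, which are those of
`Re(-g_τ · conj g_λ)` and `Im(-g_τ · conj g_λ)`, can be read off directly.
-/

open Real Complex

noncomputable section

/-- `∂g/∂λ`. -/
def gLam (γ δ b τ : ℝ) (lam : ℂ) : ℂ :=
  3 * ((τ / γ : ℝ) : ℂ) * lam ^ 2 + 2 * ((2 * τ / γ + 1 : ℝ) : ℂ) * lam +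
    ((δ + 2 - 3 * (τ / γ) * b : ℝ) : ℂ)

/-- `∂g/∂τ`. -/
def gTau (γ b : ℝ) (lam : ℂ) : ℂ :=
  ((1 / γ : ℝ) : ℂ) * lam ^ 3 + ((2 / γ : ℝ) : ℂ) * lam ^ 2 - ((3 / γ * b : ℝ) : ℂ) * lam

end

namespace Complex

theorem re_div_pos_of_pos {z g : ℂ} (hg : g ≠ 0) (h : 0 < z.re * g.re + z.im * g.im) :
    0 < (z / g).re := by
  rw [div_re, ← add_div]
  exact div_pos h (normSq_pos.2 hg)

theorem im_div_neg_of_neg {z g : ℂ} (hg : g ≠ 0) (h : z.im * g.re - z.re * g.im < 0) :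
    (z / g).im < 0 := by
  rw [div_im, div_sub_div_same]
  exact div_neg_of_neg_of_pos h (normSq_pos.2 hg)

end Complex

theorem gLam_I_mul_of_crossing {γ δ b τ μ : ℝ}
    (hcross : δ + 2 - 3 * (τ / γ) * b = τ / γ * μ ^ 2) :
    gLam γ δ b τ (I * μ) = ⟨-2 * (τ / γ) * μ ^ 2, 2 * (2 * τ / γ + 1) * μ⟩ := by
  apply Complex.ext
  · simp [gLam, pow_two, hcross]
    ring
  · simp [gLam, pow_two, hcross]

theorem neg_gTau_I_mul (γ b μ : ℝ) :
    -gTau γ b (I * μ) = ⟨2 * μ ^ 2 / γ, (μ ^ 3 + 3 * b * μ) / γ⟩ := by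
  apply Complex.ext <;> simp [gTau, pow_succ] <;> ring

theorem transversality_of_crossing {γ δ b τ μ : ℝ} (hγ : 0 < γ) (hb : 0 < b) (hτ : 0 < τ)
    (hμ : 0 < μ) (hcross : δ + 2 - 3 * (τ / γ) * b = τ / γ * μ ^ 2) :
    gLam γ δ b τ (I * μ) ≠ 0 ∧ 0 < (-gTau γ b (I * μ) / gLam γ δ b τ (I * μ)).re ∧
      (-gTau γ b (I * μ) / gLam γ δ b τ (I * μ)).im < 0 := by
  rw [gLam_I_mul_of_crossing hcross, neg_gTau_I_mul]
  have hne : (⟨-2 * (τ / γ) * μ ^ 2, 2 * (2 * τ / γ + 1) * μ⟩ : ℂ) ≠ 0 := by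
    refine fun h ↦ (congrArg Complex.im h).not_gt ?_
    simp only [zero_im]
    positivity
  refine ⟨hne, re_div_pos_of_pos hne ?_, im_div_neg_of_neg hne ?_⟩
  · have hnum : 2 * μ ^ 2 / γ * (-2 * (τ / γ) * μ ^ 2) + (μ ^ 3 + 3 * b * μ) / γ *
        (2 * (2 * τ / γ + 1) * μ) = 2 * μ ^ 2 / γ * (6 * (τ / γ) * b + μ ^ 2 + 3 * b) := by
      ring
    simp only
    rw [hnum]
    positivity
  · have hnum : (μ ^ 3 + 3 * b * μ) / γ * (-2 * (τ / γ) * μ ^ 2) - 2 * μ ^ 2 / γ *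
        (2 * (2 * τ / γ + 1) * μ) =
        -(2 * μ ^ 3 / γ * (τ / γ * (μ ^ 2 + 3 * b) + 2 * (2 * (τ / γ) + 1))) := by
      ring
    simp only
    rw [hnum, neg_neg_iff_pos]
    positivity

/-- `D - (Q + 6b)² = 36b(δa - b)`. -/
theorem add_six_mul_lt_sqrt {δ a b Q : ℝ} (hb : 0 < b) (hab : b < δ * a)
    (hQ : Q = 2 * (δ + 2) - 3 * δ * a) : Q + 6 * b < √(Q ^ 2 + 24 * (δ + 2) * b) := by
  refine Real.lt_sqrt_of_sq_lt ?_
  nlinarith [mul_pos hb (sub_pos.2 hab)]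

theorem crossing_of_eq {γ δ b S τ μ : ℝ} (hγ : 0 < γ) (hS : 6 * b < S) (hb : 0 < b)
    (hτ : τ = 2 * (δ + 2) * γ / S) (hμ : μ = √(S / 2 - 3 * b)) :
    δ + 2 - 3 * (τ / γ) * b = τ / γ * μ ^ 2 := by
  have hμsq : μ ^ 2 = S / 2 - 3 * b := by rw [hμ]; exact Real.sq_sqrt (by linarith)
  have hS0 : S ≠ 0 := by linarith
  rw [hμsq, hτ]
  field_simp

theorem stmt11 (γ δ a b : ℝ) (hγ : 0 < γ) (hδ : 0 < δ) (hb : 0 < b) (hab : b < δ * a)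
    (Q D τs μs : ℝ)
    (hQ : Q = 2 * (δ + 2) - 3 * δ * a)
    (hD : D = Q ^ 2 + 24 * (δ + 2) * b)
    (hτs : τs = 2 * (δ + 2) * γ / (Real.sqrt D - Q))
    (hμs : μs = Real.sqrt ((Real.sqrt D - Q) / 2 - 3 * b))
    (gl gt2 : ℂ → ℝ → ℂ)
    (hgl : ∀ (lam : ℂ) (τ : ℝ), gl lam τ =
      3 * ((τ / γ : ℝ) : ℂ) * lam ^ 2 + 2 * ((2 * τ / γ + 1 : ℝ) : ℂ) * lam +
      ((δ + 2 - 3 * (τ / γ) * b : ℝ) : ℂ))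
    (hgt2 : ∀ (lam : ℂ) (τ : ℝ), gt2 lam τ =
      ((1 / γ : ℝ) : ℂ) * lam ^ 3 + ((2 / γ : ℝ) : ℂ) * lam ^ 2 -
      ((3 / γ * b : ℝ) : ℂ) * lam)
    (w : ℂ)
    (hw : w = -gt2 (Complex.I * (μs : ℂ)) τs / gl (Complex.I * (μs : ℂ)) τs) :
    gl (Complex.I * (μs : ℂ)) τs ≠ 0 ∧ 0 < w.re ∧ w.im < 0 := by
  have hS : 6 * b < √D - Q := by
    have := add_six_mul_lt_sqrt hb hab hQ
    rw [← hD] at this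
    linarith
  have hτ : 0 < τs := by
    rw [hτs]
    exact div_pos (by positivity) (by linarith)
  have hμ : 0 < μs := by
    rw [hμs]
    exact Real.sqrt_pos.2 (by linarith)
  have hgl' : gl (I * μs) τs = gLam γ δ b τs (I * μs) := hgl _ _
  have hgt2' : gt2 (I * μs) τs = gTau γ b (I * μs) := hgt2 _ _
  rw [hw, hgl', hgt2']
  exact transversality_of_crossing hγ hb hτ hμ (crossing_of_eq hγ hS hb hτs hμs)
end

section
/- Let δ > 0, b ≥ 0, μ > 0, and let u : [0,1] → ℝ be continuous with ∫₀¹ u(x)² dx ≤ 1. Then the imaginary part of the complex number ∫₀¹ (3u(x)² − 3 − iμ)² dx − ((δ+2)/δ)·(−μ² + 2iμ − 3b)²/(μ² + 3b) equals 6μ·(1 − ∫₀¹ u(x)² dx) + 4μ·(δ+2)/δ, and in particular this complex number is nonzero. (This is the key computation showing that the critical pair of purely imaginary eigenvalues of the linearized shadow system is algebraically simple.) -/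
/-!
Expanding the square, the imaginary part of `(3u² - 3 - iμ)²` is `-2μ(3u² - 3)`, which
integrates to `6μ(1 - ∫u²) ≥ 0`. With `w = -(μ² + 3b) + 2iμ` one has
`Im w² = -4μ(μ² + 3b)`, so the second term contributes exactly `4μ(δ + 2)/δ > 0`.
Hence the imaginary part is positive and `z ≠ 0`.
-/

open Real Complex

theorem im_intervalIntegral_sq_sub_I_mul {u : ℝ → ℝ} {a b : ℝ}
    (hu : ContinuousOn u (Set.uIcc a b)) (μ : ℝ) :
    (∫ x in a..b, (3 * (u x : ℂ) ^ 2 - 3 - I * μ) ^ 2).im =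
      6 * μ * ((b - a) - ∫ x in a..b, u x ^ 2) := by
  have hu2 : IntervalIntegrable (fun x => u x ^ 2) MeasureTheory.volume a b :=
    (hu.pow 2).intervalIntegrable
  have hint : IntervalIntegrable (fun x => (3 * (u x : ℂ) ^ 2 - 3 - I * μ) ^ 2)
      MeasureTheory.volume a b := by
    apply ContinuousOn.intervalIntegrable
    have := continuous_ofReal.comp_continuousOn hu
    fun_prop
  have him : ∀ x, ((3 * (u x : ℂ) ^ 2 - 3 - I * μ) ^ 2).im = 6 * μ * (1 - u x ^ 2) := by
    intro x
    simp only [sq, mul_im, mul_re, sub_im, sub_re, ofReal_re, ofReal_im, I_re, I_im]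
    norm_num
    ring
  rw [← RCLike.im_to_complex, ← intervalIntegral.intervalIntegral_im hint]
  simp only [RCLike.im_to_complex, him]
  rw [intervalIntegral.integral_const_mul,
    intervalIntegral.integral_sub intervalIntegrable_const hu2, intervalIntegral.integral_const,
    smul_eq_mul, mul_one]

theorem im_ofReal_mul_sq_div {c μ b : ℝ} (hd : μ ^ 2 + 3 * b ≠ 0) :
    ((c : ℂ) * (-(μ : ℂ) ^ 2 + 2 * I * μ - 3 * b) ^ 2 / (μ ^ 2 + 3 * b)).im =
      -4 * μ * c := by
  have hcast : ((μ : ℂ) ^ 2 + 3 * b) = ((μ ^ 2 + 3 * b : ℝ) : ℂ) := by push_cast; rfl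
  rw [hcast, div_ofReal_im, im_ofReal_mul]
  field_simp
  simp [sq]
  ring

theorem stmt12 (δ b μ : ℝ) (hδ : 0 < δ) (hb : 0 ≤ b) (hμ : 0 < μ)
    (u : ℝ → ℝ) (hu : ContinuousOn u (Set.Icc 0 1))
    (hint : ∫ x in (0:ℝ)..1, (u x) ^ 2 ≤ 1)
    (z : ℂ)
    (hz : z = (∫ x in (0:ℝ)..1, (3 * (u x : ℂ) ^ 2 - 3 - Complex.I * (μ : ℂ)) ^ 2)
        - (((δ + 2) / δ : ℝ) : ℂ) *
          (-(μ : ℂ) ^ 2 + 2 * Complex.I * (μ : ℂ) - 3 * (b : ℂ)) ^ 2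
          / ((μ : ℂ) ^ 2 + 3 * (b : ℂ))) :
    z.im = 6 * μ * (1 - ∫ x in (0:ℝ)..1, (u x) ^ 2) + 4 * μ * (δ + 2) / δ ∧ z ≠ 0 := by
  have hd : μ ^ 2 + 3 * b ≠ 0 := by positivity
  have him : z.im = 6 * μ * (1 - ∫ x in (0:ℝ)..1, (u x) ^ 2) + 4 * μ * (δ + 2) / δ := by
    rw [hz, sub_im, im_intervalIntegral_sq_sub_I_mul (by rwa [Set.uIcc_of_le zero_le_one]) μ,
      im_ofReal_mul_sq_div hd]
    ring
  refine ⟨him, fun hz0 => ?_⟩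
  have hpos : 0 < z.im := by
    rw [him]
    have hfirst := mul_nonneg (by positivity : (0:ℝ) ≤ 6 * μ) (sub_nonneg.2 hint)
    positivity
  simp [hz0] at hpos
end

section
/- Let n be a positive integer, δ > 0, γ > 0, and for each ε ∈ (0, 1/(nπ)) let k(ε) ∈ (0,1) be the unique solution of √(1+k²)·K(k) = 1/(2nε). Define a(ε) := 1 − (2/(1+k(ε)²))·(1 − E(k(ε))/K(k(ε))), b(ε) := ((1−k(ε)²)/(1+k(ε)²))², Q(ε) := 2(δ+2) − 3δ·a(ε), D(ε) := Q(ε)² + 24(δ+2)·b(ε), and τ(ε) := 2(δ+2)γ/(√(D(ε)) − Q(ε)). Then τ(ε)·exp(−√2/(n·ε)) → γ(δ+2)/192 as ε → 0⁺; that is, the critical time constant for the Hopf bifurcation satisfies τ(ε) = (γ(δ+2)/192)·exp(√2/(nε))·(1+o(1)). -/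
/-!
With `k' = √(1 - k²)`, the substitution `s = √(1 - u²)` gives `k K(k) = Φ(k'/k)`, where
`Φ(c) = ∫₀¹ du / (√(1 - u²) √(c² + u²))`. Splitting `1/√(1 - u²) = 1 + (1/√(1 - u²) - 1)` gives
`Φ(c) = arsinh(1/c) + log 2 + o(1)` by dominated convergence, hence the classical
`K(k) = log (4/k') + o(1)` as `k → 1⁻`; in particular `(1 - k²) K(k) → 0`.

Since `√(1 + k²) K(k(ε)) = 1/(2nε) → ∞` and `K(k) ≤ 2/k'`, `k(ε) → 1`. As `E` stays bounded,
`a → 0` and `b → 0`, and rationalising gives `τ = γ (√D + Q)/(12 b) ~ γ (δ + 2)/(3 b)` with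
`1/b ~ 4/k'⁴`. Finally `√2/(nε) = 2√2 √(1 + k²) K = 4K - O((1 - k²) K)`, so
`exp(-√2/(nε)) ~ exp(-4K) ~ k'⁴/256`, and the product tends to `γ (δ + 2)/192`.
-/

open Real Filter Set

/-- The complete elliptic integral of the second kind. -/
noncomputable def Eint (k : ℝ) : ℝ :=
  ∫ s in (0:ℝ)..1, Real.sqrt ((1 - k ^ 2 * s ^ 2) / (1 - s ^ 2))

open MeasureTheory Topology

lemma inv_sqrt_eq_rpow {x : ℝ} (hx : 0 ≤ x) : (√x)⁻¹ = x ^ (-(1 / 2) : ℝ) := by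
  rw [rpow_neg hx, sqrt_eq_rpow]

lemma integrableOn_inv_sqrt_one_sub : IntegrableOn (fun s : ℝ => (√(1 - s))⁻¹) (Ioo 0 1) := by
  have h : IntervalIntegrable (fun s : ℝ => (1 - s) ^ (-(1 / 2) : ℝ)) volume 0 1 := by
    simpa using ((intervalIntegral.intervalIntegrable_rpow' (r := -(1 / 2)) (a := 0) (b := 1)
      (by norm_num)).comp_sub_left 1).symm
  refine ((intervalIntegrable_iff_integrableOn_Ioo_of_le zero_le_one).1 h).congr_fun
    (fun s hs => ?_) measurableSet_Ioo
  rw [inv_sqrt_eq_rpow (by linarith [hs.2])]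

lemma integral_inv_sqrt_one_sub : ∫ s in Ioo (0:ℝ) 1, (√(1 - s))⁻¹ = 2 := by
  rw [← integral_Ioc_eq_integral_Ioo, ← intervalIntegral.integral_of_le zero_le_one,
    intervalIntegral.integral_congr (g := fun s => (1 - s) ^ (-(1 / 2) : ℝ))
      fun s hs => inv_sqrt_eq_rpow (by simp at hs; linarith [hs.2]),
    intervalIntegral.integral_comp_sub_left (fun x => x ^ (-(1 / 2) : ℝ)),
    integral_rpow (Or.inl (by norm_num))]
  norm_num

lemma integrableOn_of_abs_le_inv_sqrt_one_sub {f : ℝ → ℝ} {C : ℝ} (hf : Measurable f)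
    (hbound : ∀ s ∈ Ioo (0:ℝ) 1, |f s| ≤ C * (√(1 - s))⁻¹) : IntegrableOn f (Ioo 0 1) := by
  refine Integrable.mono' (integrableOn_inv_sqrt_one_sub.const_mul C)
    hf.aestronglyMeasurable.restrict ?_
  rw [ae_restrict_iff' measurableSet_Ioo]
  exact ae_of_all _ hbound

lemma intervalIntegral_le_of_abs_le_inv_sqrt_one_sub {f : ℝ → ℝ} {C : ℝ} (hf : Measurable f)
    (hbound : ∀ s ∈ Ioo (0:ℝ) 1, |f s| ≤ C * (√(1 - s))⁻¹) : ∫ s in (0:ℝ)..1, f s ≤ 2 * C := by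
  rw [intervalIntegral.integral_of_le zero_le_one, integral_Ioc_eq_integral_Ioo,
    mul_comm, ← integral_inv_sqrt_one_sub, ← integral_const_mul]
  exact setIntegral_mono_on (integrableOn_of_abs_le_inv_sqrt_one_sub hf hbound)
    (integrableOn_inv_sqrt_one_sub.const_mul C) measurableSet_Ioo
    fun s hs => (le_abs_self _).trans (hbound s hs)

lemma Eint_le_two (k : ℝ) : Eint k ≤ 2 := by
  have h := intervalIntegral_le_of_abs_le_inv_sqrt_one_sub (C := 1)
    (f := fun s => √((1 - k ^ 2 * s ^ 2) / (1 - s ^ 2))) (by fun_prop) fun s ⟨hs0, hs1⟩ => by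
      have hs : 0 < 1 - s ^ 2 := by nlinarith
      rw [abs_of_nonneg (sqrt_nonneg _), one_mul, ← sqrt_inv]
      refine sqrt_le_sqrt ?_
      calc (1 - k ^ 2 * s ^ 2) / (1 - s ^ 2) ≤ 1 / (1 - s ^ 2) := by gcongr; nlinarith
        _ ≤ (1 - s)⁻¹ := by rw [one_div]; gcongr; nlinarith
  simpa [Eint] using h

lemma Kint_le {k : ℝ} (hk : k ^ 2 < 1) : Kint k ≤ 2 / √(1 - k ^ 2) := by
  have h := intervalIntegral_le_of_abs_le_inv_sqrt_one_sub (C := (√(1 - k ^ 2))⁻¹)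
    (f := fun s => 1 / √((1 - s ^ 2) * (1 - k ^ 2 * s ^ 2))) (by fun_prop) fun s ⟨hs0, hs1⟩ => by
      have h1 : 0 < (1 - k ^ 2) * (1 - s) := mul_pos (by linarith) (by linarith)
      rw [abs_of_nonneg (by positivity), ← mul_inv, ← sqrt_mul (by linarith), one_div]
      refine inv_anti₀ (sqrt_pos.2 h1) (sqrt_le_sqrt ?_)
      rw [mul_comm]
      have hk2 : k ^ 2 * s ^ 2 ≤ k ^ 2 := mul_le_of_le_one_right (sq_nonneg k) (by nlinarith)
      exact mul_le_mul (by nlinarith) (by linarith) (by linarith) (by nlinarith)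
  simpa [Kint, div_eq_mul_inv] using h

lemma hasDerivAt_sqrt_one_sub_sq {u : ℝ} (hu : u ^ 2 < 1) :
    HasDerivAt (fun u : ℝ => √(1 - u ^ 2)) (-u / √(1 - u ^ 2)) u := by
  have h := (hasDerivAt_sqrt (by linarith : 1 - u ^ 2 ≠ 0)).comp u
    ((hasDerivAt_pow 2 u).const_sub 1)
  refine h.congr_deriv ?_
  field_simp
  ring

lemma bijOn_sqrt_one_sub_sq : BijOn (fun u : ℝ => √(1 - u ^ 2)) (Ioo 0 1) (Ioo 0 1) := by
  have hmaps : MapsTo (fun u : ℝ => √(1 - u ^ 2)) (Ioo 0 1) (Ioo 0 1) := fun u ⟨h0, h1⟩ =>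
    ⟨sqrt_pos.2 (by nlinarith), (sqrt_lt' one_pos).2 (by nlinarith)⟩
  have hinv : ∀ u ∈ Ioo (0:ℝ) 1, √(1 - √(1 - u ^ 2) ^ 2) = u := fun u ⟨h0, h1⟩ => by
    rw [sq_sqrt (by nlinarith), sub_sub_cancel, sqrt_sq h0.le]
  exact InvOn.bijOn ⟨fun u hu => hinv u hu, fun u hu => hinv u hu⟩ hmaps hmaps

noncomputable def Phi (c : ℝ) : ℝ :=
  ∫ u in Ioo (0:ℝ) 1, 1 / (√(1 - u ^ 2) * √(c ^ 2 + u ^ 2))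

lemma mul_Kint_eq_Phi {k : ℝ} (hk0 : 0 < k) (hk1 : k < 1) :
    k * Kint k = Phi (√(1 - k ^ 2) / k) := by
  set c := √(1 - k ^ 2) / k
  have hc : k ^ 2 * c ^ 2 = 1 - k ^ 2 := by
    rw [div_pow, sq_sqrt (by nlinarith)]
    field_simp
  have hsubst := integral_image_eq_integral_abs_deriv_smul measurableSet_Ioo
    (fun u ⟨h0, h1⟩ => (hasDerivAt_sqrt_one_sub_sq (by nlinarith)).hasDerivWithinAt)
    bijOn_sqrt_one_sub_sq.injOn (fun s => 1 / √((1 - s ^ 2) * (1 - k ^ 2 * s ^ 2)))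
  rw [bijOn_sqrt_one_sub_sq.image_eq] at hsubst
  rw [Kint, intervalIntegral.integral_of_le zero_le_one, integral_Ioc_eq_integral_Ioo, hsubst,
    ← integral_const_mul, Phi]
  refine setIntegral_congr_fun measurableSet_Ioo fun u ⟨h0, h1⟩ => ?_
  have hu : 0 < √(1 - u ^ 2) := sqrt_pos.2 (by nlinarith)
  have hck : 1 - k ^ 2 * (1 - u ^ 2) = k ^ 2 * (c ^ 2 + u ^ 2) := by linear_combination -hc
  have hcu : 0 < √(c ^ 2 + u ^ 2) := sqrt_pos.2 (by positivity)
  simp only [smul_eq_mul]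
  rw [sq_sqrt (by nlinarith), sub_sub_cancel, hck, abs_div, abs_neg, abs_of_pos h0, abs_of_pos hu,
    sqrt_mul (sq_nonneg u), sqrt_mul (sq_nonneg k), sqrt_sq h0.le, sqrt_sq hk0.le]
  field_simp

noncomputable def phiCorrection (c u : ℝ) : ℝ :=
  u ^ 2 / (√(1 - u ^ 2) * (1 + √(1 - u ^ 2)) * √(c ^ 2 + u ^ 2))

lemma measurable_phiCorrection (c : ℝ) : Measurable (phiCorrection c) := by
  unfold phiCorrection
  fun_prop

lemma phiCorrection_zero {u : ℝ} (hu : 0 < u) :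
    phiCorrection 0 u = u / (√(1 - u ^ 2) * (1 + √(1 - u ^ 2))) := by
  rw [phiCorrection, zero_pow two_ne_zero, zero_add, sqrt_sq hu.le]
  field_simp

lemma phiCorrection_nonneg (c u : ℝ) : 0 ≤ phiCorrection c u := by
  unfold phiCorrection
  positivity

lemma phiCorrection_le_phiCorrection_zero (c : ℝ) {u : ℝ} (hu : u ∈ Ioo (0:ℝ) 1) :
    phiCorrection c u ≤ phiCorrection 0 u := by
  obtain ⟨h0, h1⟩ := hu
  have hs : 0 < √(1 - u ^ 2) := sqrt_pos.2 (by nlinarith)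
  have ht : 0 < √(0 ^ 2 + u ^ 2) := sqrt_pos.2 (by positivity)
  exact div_le_div_of_nonneg_left (sq_nonneg u) (by positivity)
    (mul_le_mul_of_nonneg_left (sqrt_le_sqrt (by nlinarith)) (by positivity))

lemma phiCorrection_zero_le {u : ℝ} (hu : u ∈ Ioo (0:ℝ) 1) :
    phiCorrection 0 u ≤ (√(1 - u))⁻¹ := by
  obtain ⟨h0, h1⟩ := hu
  have hs : 0 < √(1 - u ^ 2) := sqrt_pos.2 (by nlinarith)
  rw [phiCorrection_zero h0]
  calc u / (√(1 - u ^ 2) * (1 + √(1 - u ^ 2))) ≤ (√(1 - u ^ 2))⁻¹ := by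
        rw [div_le_iff₀ (by positivity)]
        field_simp
        nlinarith
    _ ≤ (√(1 - u))⁻¹ := inv_anti₀ (sqrt_pos.2 (by linarith)) (sqrt_le_sqrt (by nlinarith))

lemma abs_phiCorrection_le (c : ℝ) {u : ℝ} (hu : u ∈ Ioo (0:ℝ) 1) :
    |phiCorrection c u| ≤ 1 * (√(1 - u))⁻¹ := by
  rw [abs_of_nonneg (phiCorrection_nonneg c u), one_mul]
  exact (phiCorrection_le_phiCorrection_zero c hu).trans (phiCorrection_zero_le hu)

lemma integrableOn_phiCorrection (c : ℝ) : IntegrableOn (phiCorrection c) (Ioo 0 1) :=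
  integrableOn_of_abs_le_inv_sqrt_one_sub (measurable_phiCorrection c) fun _ =>
    abs_phiCorrection_le c

lemma integral_phiCorrection_zero : ∫ u in Ioo (0:ℝ) 1, phiCorrection 0 u = log 2 := by
  have hcont : ContinuousOn (fun u : ℝ => -log (1 + √(1 - u ^ 2))) (Icc 0 1) :=
    ContinuousOn.neg (ContinuousOn.log (by fun_prop) fun u _ => by positivity)
  have hderiv : ∀ u ∈ Ioo (0:ℝ) 1,
      HasDerivAt (fun u : ℝ => -log (1 + √(1 - u ^ 2))) (phiCorrection 0 u) u := by
    intro u ⟨h0, h1⟩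
    have hs : 0 < √(1 - u ^ 2) := sqrt_pos.2 (by nlinarith)
    refine (((hasDerivAt_sqrt_one_sub_sq (by nlinarith)).const_add 1).log
      (by positivity)).neg.congr_deriv ?_
    rw [phiCorrection_zero h0]
    field_simp
  rw [← integral_Ioc_eq_integral_Ioo, ← intervalIntegral.integral_of_le zero_le_one,
    intervalIntegral.integral_eq_sub_of_hasDeriv_right_of_le zero_le_one hcont
      (fun u hu => (hderiv u hu).hasDerivWithinAt)
      ((intervalIntegrable_iff_integrableOn_Ioo_of_le zero_le_one).2
        (integrableOn_phiCorrection 0))]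
  norm_num

lemma tendsto_integral_phiCorrection :
    Tendsto (fun c => ∫ u in Ioo (0:ℝ) 1, phiCorrection c u) (𝓝 0) (𝓝 (log 2)) := by
  rw [← integral_phiCorrection_zero]
  refine tendsto_integral_filter_of_dominated_convergence (phiCorrection 0)
    (Eventually.of_forall fun c => (measurable_phiCorrection c).aestronglyMeasurable)
    (Eventually.of_forall fun c => ?_) (integrableOn_phiCorrection 0) ?_
  · rw [ae_restrict_iff' measurableSet_Ioo]
    refine ae_of_all _ fun u hu => ?_
    rw [norm_eq_abs, abs_of_nonneg (phiCorrection_nonneg c u)]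
    exact phiCorrection_le_phiCorrection_zero c hu
  · rw [ae_restrict_iff' measurableSet_Ioo]
    refine ae_of_all _ fun u ⟨h0, h1⟩ => ?_
    have hs : 0 < √(1 - u ^ 2) := sqrt_pos.2 (by nlinarith)
    have hu : 0 < √(0 ^ 2 + u ^ 2) := sqrt_pos.2 (by positivity)
    exact (continuousAt_const.div (by fun_prop) (by positivity)).tendsto

lemma integral_one_div_sqrt_sq_add_sq {c : ℝ} (hc : 0 < c) :
    ∫ u in Ioo (0:ℝ) 1, 1 / √(c ^ 2 + u ^ 2) = arsinh (1 / c) := by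
  have hderiv : ∀ u : ℝ, HasDerivAt (fun u => arsinh (u / c)) (1 / √(c ^ 2 + u ^ 2)) u := by
    intro u
    refine ((hasDerivAt_arsinh (u / c)).comp u ((hasDerivAt_id u).div_const c)).congr_deriv ?_
    rw [show 1 + (u / c) ^ 2 = (c ^ 2 + u ^ 2) / c ^ 2 by field_simp, sqrt_div' _ (sq_nonneg c),
      sqrt_sq hc.le]
    have : 0 < √(c ^ 2 + u ^ 2) := sqrt_pos.2 (by positivity)
    field_simp
  rw [← integral_Ioc_eq_integral_Ioo, ← intervalIntegral.integral_of_le zero_le_one,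
    intervalIntegral.integral_eq_sub_of_hasDerivAt (fun u _ => hderiv u)
      (Continuous.intervalIntegrable (by fun_prop (disch := intro; positivity)) 0 1)]
  simp

lemma Phi_eq {c : ℝ} (hc : 0 < c) :
    Phi c = arsinh (1 / c) + ∫ u in Ioo (0:ℝ) 1, phiCorrection c u := by
  have hint : IntegrableOn (fun u : ℝ => 1 / √(c ^ 2 + u ^ 2)) (Ioo 0 1) :=
    (Continuous.integrableOn_Icc (by fun_prop (disch := intro; positivity))).mono_set
      Ioo_subset_Icc_self
  rw [← integral_one_div_sqrt_sq_add_sq hc, ← integral_add hint (integrableOn_phiCorrection c),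
    Phi]
  refine setIntegral_congr_fun measurableSet_Ioo fun u ⟨h0, h1⟩ => ?_
  have hs2 : √(1 - u ^ 2) ^ 2 = 1 - u ^ 2 := sq_sqrt (by nlinarith)
  have hs : 0 < √(1 - u ^ 2) := sqrt_pos.2 (by nlinarith)
  have ht : 0 < √(c ^ 2 + u ^ 2) := sqrt_pos.2 (by positivity)
  simp only [phiCorrection]
  field_simp
  linear_combination -hs2

lemma arsinh_one_div_add_log {c : ℝ} (hc : 0 < c) :
    arsinh (1 / c) + log c = log (1 + √(1 + c ^ 2)) := by
  have h : √(1 + (1 / c) ^ 2) = √(1 + c ^ 2) / c := by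
    rw [show 1 + (1 / c) ^ 2 = (1 + c ^ 2) / c ^ 2 by field_simp; ring, sqrt_div' _ (sq_nonneg c),
      sqrt_sq hc.le]
  rw [arsinh, h, ← log_mul (by positivity) hc.ne']
  congr 1
  field_simp

lemma tendsto_Phi_add_log : Tendsto (fun c => Phi c + log c) (𝓝[>] 0) (𝓝 (log 4)) := by
  have hlog : Tendsto (fun c : ℝ => log (1 + √(1 + c ^ 2))) (𝓝 0) (𝓝 (log 2)) := by
    have h : ContinuousAt (fun c : ℝ => log (1 + √(1 + c ^ 2))) 0 :=
      (continuousAt_log (by positivity)).comp (by fun_prop)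
    simpa [one_add_one_eq_two] using h.tendsto
  have hsum := (hlog.add tendsto_integral_phiCorrection).mono_left (nhdsWithin_le_nhds (s := Ioi 0))
  rw [← log_mul two_ne_zero two_ne_zero, show (2:ℝ) * 2 = 4 by norm_num] at hsum
  refine hsum.congr' (eventually_nhdsWithin_of_forall fun c (hc : 0 < c) => ?_)
  show _ = Phi c + log c
  rw [Phi_eq hc, ← arsinh_one_div_add_log hc]
  ring

lemma tendsto_one_sub_sq_nhdsGT : Tendsto (fun k : ℝ => 1 - k ^ 2) (𝓝[<] 1) (𝓝[>] 0) := by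
  refine tendsto_nhdsWithin_iff.2 ⟨?_, ?_⟩
  · simpa using ((by fun_prop : Continuous fun k : ℝ => 1 - k ^ 2).tendsto 1).mono_left
      nhdsWithin_le_nhds
  · filter_upwards [Ioo_mem_nhdsLT (zero_lt_one' ℝ)] with k ⟨h0, h1⟩
    show 0 < 1 - k ^ 2
    nlinarith

lemma tendsto_sqrt_one_sub_sq_div : Tendsto (fun k : ℝ => √(1 - k ^ 2) / k) (𝓝[<] 1) (𝓝[>] 0) := by
  refine tendsto_nhdsWithin_iff.2 ⟨?_, ?_⟩
  · have h : ContinuousAt (fun k : ℝ => √(1 - k ^ 2) / k) 1 :=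
      (by fun_prop : Continuous fun k : ℝ => √(1 - k ^ 2)).continuousAt.div continuousAt_id
        one_ne_zero
    simpa using h.tendsto.mono_left nhdsWithin_le_nhds
  · filter_upwards [Ioo_mem_nhdsLT (zero_lt_one' ℝ)] with k ⟨h0, h1⟩
    exact div_pos (sqrt_pos.2 (by nlinarith)) h0

lemma tendsto_mul_log_one_sub_sq :
    Tendsto (fun k : ℝ => (1 - k ^ 2) * log (1 - k ^ 2)) (𝓝 1) (𝓝 0) :=
  (continuous_mul_log.comp (by fun_prop : Continuous fun k : ℝ => 1 - k ^ 2)).tendsto' 1 0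
    (by simp)

lemma tendsto_Kint_add_half_log :
    Tendsto (fun k => Kint k + log (1 - k ^ 2) / 2) (𝓝[<] 1) (𝓝 (log 4)) := by
  have hPhi := (tendsto_Phi_add_log.comp tendsto_sqrt_one_sub_sq_div).div
    (tendsto_id.mono_left nhdsWithin_le_nhds) one_ne_zero
  have hlog : ContinuousAt (fun k : ℝ => log k / k) 1 :=
    (continuousAt_log one_ne_zero).div continuousAt_id one_ne_zero
  have hmul : Tendsto (fun k : ℝ => (1 - k ^ 2) * log (1 - k ^ 2) / (2 * k * (1 + k))) (𝓝 1)
      (𝓝 0) := by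
    have h := tendsto_mul_log_one_sub_sq.div ((by fun_prop : Continuous fun k : ℝ =>
      2 * k * (1 + k)).tendsto 1) (by norm_num)
    rwa [zero_div] at h
  have hsum := hPhi.add ((hlog.tendsto.sub hmul).mono_left nhdsWithin_le_nhds)
  rw [div_one, log_one, zero_div, sub_zero, add_zero] at hsum
  refine hsum.congr' ?_
  filter_upwards [Ioo_mem_nhdsLT (zero_lt_one' ℝ)] with k ⟨h0, h1⟩
  have hq : 0 < 1 - k ^ 2 := by nlinarith
  show (Phi (√(1 - k ^ 2) / k) + log (√(1 - k ^ 2) / k)) / k + _ = _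
  rw [← mul_Kint_eq_Phi h0 h1, log_div (sqrt_pos.2 hq).ne' h0.ne', log_sqrt hq.le]
  field_simp
  ring

lemma tendsto_one_sub_sq_mul_Kint : Tendsto (fun k => (1 - k ^ 2) * Kint k) (𝓝[<] 1) (𝓝 0) := by
  have h := ((tendsto_one_sub_sq_nhdsGT.mono_right nhdsWithin_le_nhds).mul
    tendsto_Kint_add_half_log).sub
    ((tendsto_mul_log_one_sub_sq.mono_left nhdsWithin_le_nhds).div_const 2)
  rw [zero_mul, zero_div, sub_zero] at h
  exact h.congr fun k => by ring

lemma tendsto_Kint_atTop : Tendsto Kint (𝓝[<] 1) atTop := by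
  have hlog : Tendsto (fun k : ℝ => -log (1 - k ^ 2) / 2) (𝓝[<] 1) atTop :=
    (tendsto_neg_atBot_atTop.comp (tendsto_log_nhdsGT_zero.comp
      tendsto_one_sub_sq_nhdsGT)).atTop_div_const two_pos
  exact (tendsto_Kint_add_half_log.add_atTop hlog).congr fun k => by ring

lemma Eint_nonneg (k : ℝ) : 0 ≤ Eint k :=
  intervalIntegral.integral_nonneg zero_le_one fun _ _ => sqrt_nonneg _

lemma tendsto_Eint_div_Kint : Tendsto (fun k => Eint k / Kint k) (𝓝[<] 1) (𝓝 0) := by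
  refine squeeze_zero' ?_ ?_ ((tendsto_const_nhds (x := (2:ℝ))).div_atTop tendsto_Kint_atTop)
  · filter_upwards [tendsto_Kint_atTop.eventually_gt_atTop 0] with k hk
    exact div_nonneg (Eint_nonneg k) hk.le
  · filter_upwards [tendsto_Kint_atTop.eventually_gt_atTop 0] with k hk
    exact div_le_div_of_nonneg_right (Eint_le_two k) hk.le

lemma four_sub_two_mul_sqrt_two_mul_sqrt_one_add_sq (k : ℝ) :
    4 - 2 * √2 * √(1 + k ^ 2) = 2 * √2 / (√2 + √(1 + k ^ 2)) * (1 - k ^ 2) := by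
  have h2 : √2 ^ 2 = 2 := sq_sqrt zero_le_two
  have hk : √(1 + k ^ 2) ^ 2 = 1 + k ^ 2 := sq_sqrt (by positivity)
  have : 0 < √2 + √(1 + k ^ 2) := by positivity
  field_simp
  linear_combination (-2 * √(1 + k ^ 2)) * h2 + (-2 * √2) * hk

lemma tendsto_exp_Kint_div_sq :
    Tendsto (fun k => exp (-(2 * √2 * √(1 + k ^ 2) * Kint k)) / (1 - k ^ 2) ^ 2) (𝓝[<] 1)
      (𝓝 (1 / 256)) := by
  have hg : Tendsto (fun k : ℝ => 2 * √2 / (√2 + √(1 + k ^ 2))) (𝓝[<] 1) (𝓝 1) := by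
    have h : ContinuousAt (fun k : ℝ => 2 * √2 / (√2 + √(1 + k ^ 2))) 1 :=
      continuousAt_const.div (by fun_prop) (by positivity)
    convert h.tendsto.mono_left nhdsWithin_le_nhds using 2
    rw [one_pow, one_add_one_eq_two, ← two_mul, mul_div_mul_left _ _ two_ne_zero,
      div_self (by positivity)]
  have hexp := (continuous_exp.tendsto _).comp
    ((tendsto_Kint_add_half_log.const_mul (-4)).add (hg.mul tendsto_one_sub_sq_mul_Kint))
  have hval : exp (-4 * log 4 + 1 * 0) = 1 / 256 := by
    rw [mul_zero, add_zero, neg_mul, show (4:ℝ) * log 4 = log (4 ^ 4) by rw [log_pow]; norm_num,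
      exp_neg, exp_log (by norm_num)]
    norm_num
  rw [hval] at hexp
  refine hexp.congr' ?_
  filter_upwards [Ioo_mem_nhdsLT (zero_lt_one' ℝ)] with k ⟨h0, h1⟩
  have hq : 0 < 1 - k ^ 2 := by nlinarith
  have hexponent : -4 * (Kint k + log (1 - k ^ 2) / 2)
      + 2 * √2 / (√2 + √(1 + k ^ 2)) * ((1 - k ^ 2) * Kint k)
      = -(2 * √2 * √(1 + k ^ 2) * Kint k) - log ((1 - k ^ 2) ^ 2) := by
    rw [log_pow, ← mul_assoc, ← four_sub_two_mul_sqrt_two_mul_sqrt_one_add_sq]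
    push_cast
    ring
  simp only [Function.comp_apply]
  rw [hexponent, exp_sub, exp_log (by positivity)]

lemma tendsto_one_sub_sq_div_one_add_sq_sq :
    Tendsto (fun k : ℝ => ((1 - k ^ 2) / (1 + k ^ 2)) ^ 2) (𝓝 1) (𝓝 0) :=
  (by fun_prop (disch := intro; positivity) : Continuous fun k : ℝ =>
    ((1 - k ^ 2) / (1 + k ^ 2)) ^ 2).tendsto' 1 0 (by norm_num)

lemma tendsto_exp_Kint_div_sq_one_sub_sq_div_one_add_sq :
    Tendsto (fun k => exp (-(2 * √2 * √(1 + k ^ 2) * Kint k)) / ((1 - k ^ 2) / (1 + k ^ 2)) ^ 2)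
      (𝓝[<] 1) (𝓝 (1 / 64)) := by
  have h := tendsto_exp_Kint_div_sq.mul
    (((by fun_prop : Continuous fun k : ℝ => (1 + k ^ 2) ^ 2).tendsto' 1 4 (by norm_num)).mono_left
      nhdsWithin_le_nhds)
  rw [show (1 / 256 : ℝ) * 4 = 1 / 64 by norm_num] at h
  exact h.congr fun k => by rw [div_pow, div_div_eq_mul_div]; ring

lemma tendsto_one_sub_two_div_mul_one_sub_Eint_div_Kint :
    Tendsto (fun k => 1 - 2 / (1 + k ^ 2) * (1 - Eint k / Kint k)) (𝓝[<] 1) (𝓝 0) := by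
  have h2 : ContinuousAt (fun k : ℝ => 2 / (1 + k ^ 2)) 1 :=
    continuousAt_const.div (by fun_prop) (by norm_num)
  have h := (tendsto_const_nhds (x := (1:ℝ))).sub ((h2.tendsto.mono_left nhdsWithin_le_nhds).mul
    ((tendsto_const_nhds (x := (1:ℝ))).sub tendsto_Eint_div_Kint))
  norm_num at h
  exact h

lemma tendsto_nhdsLT_one_of_tendsto_Kint {α : Type*} {l : Filter α} {k : α → ℝ}
    (hk : ∀ᶠ x in l, k x ∈ Ioo 0 1) (hK : Tendsto (fun x => Kint (k x)) l atTop) :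
    Tendsto k l (𝓝[<] 1) := by
  have hinv : Tendsto (fun x => 4 / Kint (k x) ^ 2) l (𝓝 0) :=
    tendsto_const_nhds.div_atTop ((tendsto_pow_atTop two_ne_zero).comp hK)
  have hsub : Tendsto (fun x => 1 - k x) l (𝓝 0) := by
    refine squeeze_zero' (hk.mono fun x hx => by linarith [hx.2]) ?_ hinv
    filter_upwards [hk, hK.eventually_gt_atTop 0] with x ⟨h0, h1⟩ hpos
    have hq : 0 < 1 - k x ^ 2 := by nlinarith
    have hle : √(1 - k x ^ 2) ≤ 2 / Kint (k x) := by
      have := Kint_le (by nlinarith : k x ^ 2 < 1)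
      rw [le_div_iff₀ (sqrt_pos.2 hq)] at this
      rw [le_div_iff₀ hpos]
      linarith
    calc 1 - k x ≤ √(1 - k x ^ 2) ^ 2 := by rw [sq_sqrt hq.le]; nlinarith
      _ ≤ (2 / Kint (k x)) ^ 2 := by gcongr
      _ = 4 / Kint (k x) ^ 2 := by ring
  refine tendsto_nhdsWithin_iff.2 ⟨?_, hk.mono fun x hx => hx.2⟩
  simpa using (tendsto_const_nhds (x := (1:ℝ))).sub hsub

lemma tendsto_Kint_atTop_of_sqrt_mul_Kint_eq {n : ℝ} (hn : 0 < n) {s : Set ℝ} (hs : s ⊆ Ioi 0)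
    {k : ℝ → ℝ} (hk : ∀ ε ∈ s, k ε ∈ Ioo 0 1 ∧ √(1 + k ε ^ 2) * Kint (k ε) = 1 / (2 * n * ε)) :
    Tendsto (fun ε => Kint (k ε)) (𝓝[s] 0) atTop := by
  have hinv : Tendsto (fun ε : ℝ => ε⁻¹) (𝓝[s] 0) atTop :=
    tendsto_inv_nhdsGT_zero.mono_left (nhdsWithin_mono 0 hs)
  refine tendsto_atTop_mono' _ ?_ (hinv.const_mul_atTop (by positivity : 0 < 1 / (2 * √2 * n)))
  filter_upwards [self_mem_nhdsWithin] with ε hε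
  obtain ⟨⟨h0, h1⟩, hK⟩ := hk ε hε
  have hε0 : 0 < ε := hs hε
  have hpos : 0 < √(1 + k ε ^ 2) := by positivity
  calc 1 / (2 * √2 * n) * ε⁻¹ = 1 / (2 * n * ε) / √2 := by field_simp
    _ ≤ 1 / (2 * n * ε) / √(1 + k ε ^ 2) :=
      div_le_div_of_nonneg_left (by positivity) hpos (sqrt_le_sqrt (by nlinarith))
    _ = Kint (k ε) := by rw [← hK]; field_simp

lemma div_sqrt_sq_add_mul_sub {p q r : ℝ} (hp : 0 < p) (hr : 0 < r) :
    p / (√(q ^ 2 + p * r) - q) = (√(q ^ 2 + p * r) + q) / r := by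
  have hlt : |q| < √(q ^ 2 + p * r) := by
    rw [← sqrt_sq_eq_abs]
    exact sqrt_lt_sqrt (sq_nonneg q) (by linarith [mul_pos hp hr])
  have hs : √(q ^ 2 + p * r) ^ 2 = q ^ 2 + p * r := sq_sqrt (by positivity)
  rw [div_eq_div_iff (by linarith [le_abs_self q]) hr.ne']
  linear_combination -hs

lemma tendsto_sqrt_sq_add_mul_add {α : Type*} {l : Filter α} {Q b : α → ℝ} {q : ℝ} (p : ℝ)
    (hq : 0 ≤ q) (hQ : Tendsto Q l (𝓝 q)) (hb : Tendsto b l (𝓝 0)) :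
    Tendsto (fun x => √(Q x ^ 2 + p * b x) + Q x) l (𝓝 (2 * q)) := by
  have h := ((hQ.pow 2).add (hb.const_mul p)).sqrt.add hQ
  rwa [mul_zero, add_zero, sqrt_sq hq, ← two_mul] at h

theorem stmt14_general (n : ℕ) (hn : 0 < n) (δ γ : ℝ) (hδ : 0 < δ) (k : ℝ → ℝ)
    (hk : ∀ ε ∈ Set.Ioo (0:ℝ) (1 / (n * Real.pi)),
      k ε ∈ Set.Ioo (0:ℝ) 1 ∧
      Real.sqrt (1 + (k ε) ^ 2) * Kint (k ε) = 1 / (2 * n * ε))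
    (a b Q D τ : ℝ → ℝ)
    (ha : ∀ ε, a ε = 1 - 2 / (1 + (k ε) ^ 2) * (1 - Eint (k ε) / Kint (k ε)))
    (hb : ∀ ε, b ε = ((1 - (k ε) ^ 2) / (1 + (k ε) ^ 2)) ^ 2)
    (hQ : ∀ ε, Q ε = 2 * (δ + 2) - 3 * δ * a ε)
    (hD : ∀ ε, D ε = (Q ε) ^ 2 + 24 * (δ + 2) * b ε)
    (hτ : ∀ ε, τ ε = 2 * (δ + 2) * γ / (Real.sqrt (D ε) - Q ε)) :
    Filter.Tendsto
      (fun ε : ℝ => τ ε * Real.exp (-(Real.sqrt 2) / (n * ε)))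
      (nhdsWithin 0 (Set.Ioo (0:ℝ) (1 / (n * Real.pi))))
      (nhds (γ * (δ + 2) / 192)) := by
  have hmem : ∀ᶠ ε in 𝓝[Ioo 0 (1 / (n * π))] 0, ε ∈ Ioo 0 (1 / (n * π)) := self_mem_nhdsWithin
  have hk1 : Tendsto k (𝓝[Ioo 0 (1 / (n * π))] 0) (𝓝[<] 1) :=
    tendsto_nhdsLT_one_of_tendsto_Kint (hmem.mono fun ε hε => (hk ε hε).1)
      (tendsto_Kint_atTop_of_sqrt_mul_Kint_eq (Nat.cast_pos.2 hn) Ioo_subset_Ioi_self hk)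
  have hQ0 : Tendsto Q (𝓝[Ioo 0 (1 / (n * π))] 0) (𝓝 (2 * (δ + 2))) := by
    have h := (tendsto_const_nhds (x := 2 * (δ + 2))).sub
      ((tendsto_one_sub_two_div_mul_one_sub_Eint_div_Kint.comp hk1).const_mul (3 * δ))
    rw [mul_zero, sub_zero] at h
    exact h.congr fun ε => by simp [hQ, ha]
  have hb0 : Tendsto b (𝓝[Ioo 0 (1 / (n * π))] 0) (𝓝 0) :=
    ((tendsto_one_sub_sq_div_one_add_sq_sq.comp (hk1.mono_right nhdsWithin_le_nhds))).congr
      fun ε => (hb ε).symm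
  have hlim := ((tendsto_sqrt_sq_add_mul_add (24 * (δ + 2)) (by positivity) hQ0 hb0).const_mul
    (γ / 12)).mul (tendsto_exp_Kint_div_sq_one_sub_sq_div_one_add_sq.comp hk1)
  rw [show γ * (δ + 2) / 192 = γ / 12 * (2 * (2 * (δ + 2))) * (1 / 64) by ring]
  refine hlim.congr' (hmem.mono fun ε hε => ?_)
  obtain ⟨⟨h0, h1⟩, hK⟩ := hk ε hε
  have hexp : -√2 / (n * ε) = -(2 * √2 * √(1 + k ε ^ 2) * Kint (k ε)) := by
    have : (0:ℝ) < n * ε := mul_pos (Nat.cast_pos.2 hn) hε.1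
    rw [mul_assoc _ √(1 + k ε ^ 2), hK]
    field_simp
  have hbpos : 0 < b ε := by
    have : 0 < 1 - k ε ^ 2 := by nlinarith
    rw [hb]
    positivity
  show _ = τ ε * exp (-√2 / (n * ε))
  rw [Function.comp_apply, ← hb, hτ, hexp, hD,
    show 2 * (δ + 2) * γ = γ / 12 * (24 * (δ + 2)) by ring, mul_div_assoc,
    div_sqrt_sq_add_mul_sub (by positivity) hbpos]
  ring

theorem stmt14 (n : ℕ) (hn : 0 < n) (δ γ : ℝ) (hδ : 0 < δ) (hγ : 0 < γ) (k : ℝ → ℝ)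
    (hk : ∀ ε ∈ Set.Ioo (0:ℝ) (1 / (n * Real.pi)),
      k ε ∈ Set.Ioo (0:ℝ) 1 ∧
      Real.sqrt (1 + (k ε) ^ 2) * Kint (k ε) = 1 / (2 * n * ε))
    (a b Q D τ : ℝ → ℝ)
    (ha : ∀ ε, a ε = 1 - 2 / (1 + (k ε) ^ 2) * (1 - Eint (k ε) / Kint (k ε)))
    (hb : ∀ ε, b ε = ((1 - (k ε) ^ 2) / (1 + (k ε) ^ 2)) ^ 2)
    (hQ : ∀ ε, Q ε = 2 * (δ + 2) - 3 * δ * a ε)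
    (hD : ∀ ε, D ε = (Q ε) ^ 2 + 24 * (δ + 2) * b ε)
    (hτ : ∀ ε, τ ε = 2 * (δ + 2) * γ / (Real.sqrt (D ε) - Q ε)) :
    Filter.Tendsto
      (fun ε : ℝ => τ ε * Real.exp (-(Real.sqrt 2) / (n * ε)))
      (nhdsWithin 0 (Set.Ioo (0:ℝ) (1 / (n * Real.pi))))
      (nhds (γ * (δ + 2) / 192)) :=
  stmt14_general n hn δ γ hδ k hk a b Q D τ ha hb hQ hD hτ
end

section
/- Let τ, γ, δ > 0, a > 0, and b ≥ 0. Then every real root λ of the cubic g(·,τ) satisfies λ ≤ −1 + √(1 + 3b); equivalently, if λ ∈ ℝ and λ > −1 + √(1 + 3b), then g(λ,τ) ≠ 0. (In the shadow system this says that for every τ > 0 all real eigenvalues arising from the nonlocal cubic are bounded above by the principal eigenvalue μ₀ = −1+√(1+3(1−ρ²)²) of the scalar linearization, which is exponentially small in ε; this yields metastability of the multi-layer stationary solutions for large τ.) -/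
/-!
Writing `q = τ / γ`, the cubic splits as
`g(λ) = (q λ + 1) (λ² + 2 λ - 3 b) + δ (λ + 3 a)`.
The quadratic factor vanishes exactly at `λ = -1 ± √(1 + 3 b)`, so to the right of
`-1 + √(1 + 3 b)` (which is `≥ 0` when `b ≥ 0`) both summands are positive.
-/

open Real

lemma lt_sq_add_two_mul_of_neg_one_add_sqrt_lt {c x : ℝ} (hx : -1 + √(1 + c) < x) :
    c < x ^ 2 + 2 * x := by
  have hlt : √(1 + c) < x + 1 := by linarith
  have hle : 1 + c ≤ √(1 + c) ^ 2 := by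
    rcases le_total 0 (1 + c) with h | h
    · rw [sq_sqrt h]
    · nlinarith
  nlinarith [sqrt_nonneg (1 + c)]

lemma cubic_pos {q δ a b x : ℝ} (hq : 0 ≤ q) (hδ : 0 ≤ δ) (ha : 0 ≤ a) (hx : 0 ≤ x)
    (hquad : 3 * b < x ^ 2 + 2 * x) :
    0 < q * x ^ 3 + (2 * q + 1) * x ^ 2 + (δ + 2 - 3 * q * b) * x + 3 * δ * a - 3 * b := by
  have hsplit : q * x ^ 3 + (2 * q + 1) * x ^ 2 + (δ + 2 - 3 * q * b) * x + 3 * δ * a - 3 * b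
      = (q * x + 1) * (x ^ 2 + 2 * x - 3 * b) + δ * (x + 3 * a) := by ring
  rw [hsplit]
  have hquad' : 0 < x ^ 2 + 2 * x - 3 * b := by linarith
  positivity

theorem stmt17 (τ γ δ a b : ℝ) (hτ : 0 < τ) (hγ : 0 < γ) (hδ : 0 < δ)
    (ha : 0 < a) (hb : 0 ≤ b)
    (g : ℝ → ℝ → ℝ)
    (hg : ∀ lam τ' : ℝ, g lam τ' =
      (τ' / γ) * lam ^ 3 + (2 * τ' / γ + 1) * lam ^ 2 +
      (δ + 2 - 3 * (τ' / γ) * b) * lam + 3 * δ * a - 3 * b) :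
    ∀ lam : ℝ, -1 + Real.sqrt (1 + 3 * b) < lam → g lam τ ≠ 0 := by
  intro lam hlam
  have hsqrt : 1 ≤ √(1 + 3 * b) := one_le_sqrt.mpr (by linarith)
  rw [hg, mul_div_assoc]
  exact (cubic_pos (div_pos hτ hγ).le hδ.le ha.le (by linarith)
    (lt_sq_add_two_mul_of_neg_one_add_sqrt_lt hlam)).ne'
end
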